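/- arXiv:1304.3327 — 12 statements merged into one kernel-verified Lean document; each statement's English description precedes it below -/
import Mathlib

section
/- If φ is a continuous flow of a compact metric space X and μ is an expansive measure for φ, then the support of μ contains no singularity of φ: Sing(φ) ∩ supp(μ) = ∅. -/
open MeasureTheory

/-- The dynamical ball `Γ_δ(x)` of a flow. -/
def Gamma {X : Type*} [MetricSpace X] (φ : ℝ → X → X) (δ : ℝ) (x : X) : Set X :=
  {y | ∃ h : ℝ → ℝ, Continuous h ∧ h 0 = 0 ∧ ∀ t : ℝ, dist (φ t x) (φ (h t) y) ≤ δ}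

/-- The support of an expansive measure of a continuous flow on a compact metric space
contains no singularities: every singularity has a neighborhood of measure zero. -/
theorem singularities_not_in_support
    {X : Type*} [MetricSpace X] [CompactSpace X] [MeasurableSpace X] [BorelSpace X]
    (φ : ℝ → X → X)
    (hcont : Continuous fun p : ℝ × X => φ p.1 p.2)
    (hzero : ∀ x, φ 0 x = x)
    (hadd : ∀ s t x, φ t (φ s x) = φ (t + s) x)
    (μ : Measure X)
    (hexp : ∃ δ > 0, ∀ x : X, μ (Gamma φ δ x) = 0) :
    ∀ σ : X, (∀ t : ℝ, φ t σ = σ) → ∃ ε > 0, μ (Metric.ball σ ε) = 0 := by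
  intro σ hσ
  obtain ⟨δ, hδ, hμ⟩ := hexp
  refine ⟨δ, hδ, measure_mono_null ?_ (hμ σ)⟩
  intro y hy
  refine ⟨fun _ => 0, continuous_const, rfl, fun t => ?_⟩
  rw [hσ t, hzero y]
  exact le_of_lt (Metric.mem_ball'.mp hy)
end

section
/- Let φ be a continuous flow on a compact metric space X and T ≠ 0 a real number. For every δ > 0 there is α > 0 such that for all x ∈ X, the dynamical ball of the time-T map, Γ̂_α^{φ_T}(x) = {y : d(φ_{nT}(x), φ_{nT}(y)) ≤ α for all n ∈ ℤ}, is contained in Γ_δ(x). -/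
/-- For every `δ > 0` and `T ≠ 0` there is `α > 0` such that the dynamical ball of
the time-`T` map with constant `α` is contained in `Γ_δ(x)`, for all `x`. -/
theorem timeT_dynamical_ball_subset_Gamma
    {X : Type*} [MetricSpace X] [CompactSpace X]
    (φ : ℝ → X → X)
    (hcont : Continuous fun p : ℝ × X => φ p.1 p.2)
    (hzero : ∀ x, φ 0 x = x)
    (hadd : ∀ s t x, φ t (φ s x) = φ (t + s) x)
    (T : ℝ) (hT : T ≠ 0) :
    ∀ δ > 0, ∃ α > 0, ∀ x : X,
      {y : X | ∀ n : ℤ, dist (φ (n * T) x) (φ (n * T) y) ≤ α} ⊆ Gamma φ δ x := by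
  intro δ hδ
  set K : Set ℝ := Set.Icc (-|T|) |T| with hK
  haveI : CompactSpace K := isCompact_iff_compactSpace.mp isCompact_Icc
  have hΦ : Continuous fun p : K × X => φ p.1 p.2 := by
    exact hcont.comp ((continuous_subtype_val.comp continuous_fst).prodMk continuous_snd)
  have hUC : UniformContinuous fun p : K × X => φ p.1 p.2 :=
    CompactSpace.uniformContinuous_of_continuous hΦ
  obtain ⟨η, hη, hηd⟩ := Metric.uniformContinuous_iff.mp hUC δ hδ
  refine ⟨η / 2, by positivity, fun x y hy => ?_⟩
  refine ⟨id, continuous_id, rfl, fun t => ?_⟩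
  -- decompose t = s + n*T
  set n : ℤ := round (t / T) with hn
  set s : ℝ := t - n * T with hs
  have hsK : s ∈ K := by
    have h1 : |t / T - n| ≤ 1 / 2 := abs_sub_round (t / T)
    have h2 : s = (t / T - n) * T := by rw [hs]; field_simp
    have h3 : |s| ≤ |T| := by
      rw [h2, abs_mul]
      calc |t / T - (n : ℝ)| * |T| ≤ (1 / 2) * |T| := by
            apply mul_le_mul_of_nonneg_right h1 (abs_nonneg T)
        _ ≤ |T| := by
            have := abs_nonneg T; linarith
    exact abs_le.mp h3 |>.imp (fun h => h) (fun h => h)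
  have hx' : φ t x = φ s (φ (n * T) x) := by rw [hadd]; congr 1; rw [hs]; ring
  have hy' : φ t y = φ s (φ (n * T) y) := by rw [hadd]; congr 1; rw [hs]; ring
  simp only [id]
  rw [hx', hy']
  have hd : dist ((⟨s, hsK⟩ : K), φ (n * T) x) ((⟨s, hsK⟩ : K), φ (n * T) y) < η := by
    rw [Prod.dist_eq]
    have : dist (⟨s, hsK⟩ : K) (⟨s, hsK⟩ : K) = 0 := dist_self _
    rw [this, max_eq_right dist_nonneg]
    calc dist (φ (n * T) x) (φ (n * T) y) ≤ η / 2 := hy n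
      _ < η := by linarith
  have := hηd hd
  exact le_of_lt this
end

section
/- If μ is an expansive measure of a continuous flow φ on a compact metric space X, then μ is an expansive measure for the time-T map φ_T for every T ≠ 0, i.e., there exists α > 0 with μ(Γ̂_α^{φ_T}(x)) = 0 for all x ∈ X. -/
open MeasureTheory

/-- An expansive measure of a continuous flow on a compact metric space is
expansive for every time-`T` map, `T ≠ 0`. -/
theorem expansive_measure_for_timeT_map
    {X : Type*} [MetricSpace X] [CompactSpace X] [MeasurableSpace X] [BorelSpace X]
    (φ : ℝ → X → X)
    (hcont : Continuous fun p : ℝ × X => φ p.1 p.2)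
    (hzero : ∀ x, φ 0 x = x)
    (hadd : ∀ s t x, φ t (φ s x) = φ (t + s) x)
    (μ : Measure X)
    (hexp : ∃ δ > 0, ∀ x : X, μ (Gamma φ δ x) = 0)
    (T : ℝ) (hT : T ≠ 0) :
    ∃ α > 0, ∀ x : X,
      μ {y : X | ∀ n : ℤ, dist (φ (n * T) x) (φ (n * T) y) ≤ α} = 0 := by
  obtain ⟨δ, hδ, hμ⟩ := hexp
  haveI : CompactSpace (Set.uIcc (0:ℝ) T) :=
    isCompact_iff_compactSpace.mp isCompact_uIcc
  have hΦ : Continuous fun p : (Set.uIcc (0:ℝ) T) × X => φ p.1 p.2 :=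
    hcont.comp (continuous_subtype_val.prodMap continuous_id)
  have hUC := CompactSpace.uniformContinuous_of_continuous hΦ
  rw [Metric.uniformContinuous_iff] at hUC
  obtain ⟨α, hα, hαd⟩ := hUC δ hδ
  refine ⟨α/2, by linarith, fun x => ?_⟩
  have hsub : {y : X | ∀ n : ℤ, dist (φ (n*T) x) (φ (n*T) y) ≤ α/2} ⊆ Gamma φ δ x := by
    intro y hy
    refine ⟨id, continuous_id, rfl, fun t => ?_⟩
    simp only [id]
    set n : ℤ := ⌊t / T⌋ with hn
    set s : ℝ := t - n * T with hs
    have h1 : (n:ℝ) ≤ t / T := Int.floor_le _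
    have h2 : t / T < n + 1 := Int.lt_floor_add_one _
    have ht : t / T * T = t := div_mul_cancel₀ t hT
    have hsI : s ∈ Set.uIcc (0:ℝ) T := by
      rcases lt_or_gt_of_ne hT with hTneg | hTpos
      · rw [Set.uIcc_of_ge hTneg.le]
        constructor
        · nlinarith [mul_le_mul_of_nonpos_right h2.le hTneg.le]
        · nlinarith [mul_le_mul_of_nonpos_right h1 hTneg.le]
      · rw [Set.uIcc_of_le hTpos.le]
        constructor
        · nlinarith [mul_le_mul_of_nonneg_right h1 hTpos.le]
        · nlinarith [mul_le_mul_of_nonneg_right h2.le hTpos.le]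
    have hd : dist (φ s (φ (n*T) x)) (φ s (φ (n*T) y)) < δ := by
      have := hαd (a := (⟨s, hsI⟩, φ (n*T) x)) (b := (⟨s, hsI⟩, φ (n*T) y)) ?_
      · exact this
      · rw [Prod.dist_eq, Subtype.dist_eq]
        simp only [dist_self]
        rw [max_eq_right dist_nonneg]
        linarith [hy n]
    have e1 : φ s (φ (n*T) x) = φ t x := by
      rw [hadd]; congr 1; rw [hs]; ring
    have e2 : φ s (φ (n*T) y) = φ t y := by
      rw [hadd]; congr 1; rw [hs]; ring
    rw [e1, e2] at hd
    exact hd.le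
  exact measure_mono_null hsub (hμ x)
end

section
/- Let f : X → Y be an equivalence between continuous flows φ on X and ψ on Y (compact metric spaces), i.e., a homeomorphism carrying orbits of φ onto orbits of ψ. Then for every δ > 0 there is α > 0 such that f⁻¹(Γ_{α,ψ}(z)) ⊆ Γ_{δ,φ}(f⁻¹(z)) for all z ∈ Y, assuming that for each x ∈ X there is a homeomorphism h_x : ℝ → ℝ with h_x(0) = 0 satisfying f⁻¹(ψ_t(f(x))) = φ_{h_x(t)}(x) for all t. -/
/-- If `f` is an equivalence between continuous flows `φ` and `ψ` on compact metric
spaces (with orbit reparametrizations `h_x`), then for every `δ > 0` there is `α > 0`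
with `f⁻¹(Γ_{α,ψ}(z)) ⊆ Γ_{δ,φ}(f⁻¹(z))` for every `z`. -/
theorem equivalence_Gamma_inclusion
    {X Y : Type*} [MetricSpace X] [CompactSpace X] [MetricSpace Y] [CompactSpace Y]
    (φ : ℝ → X → X) (ψ : ℝ → Y → Y)
    (hcφ : Continuous fun p : ℝ × X => φ p.1 p.2)
    (hzφ : ∀ x, φ 0 x = x)
    (haφ : ∀ s t x, φ t (φ s x) = φ (t + s) x)
    (hcψ : Continuous fun p : ℝ × Y => ψ p.1 p.2)
    (hzψ : ∀ y, ψ 0 y = y)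
    (haψ : ∀ s t y, ψ t (ψ s y) = ψ (t + s) y)
    (f : X ≃ₜ Y)
    (horb : ∀ x : X, f '' Set.range (fun t : ℝ => φ t x)
      = Set.range fun t : ℝ => ψ t (f x))
    (hrep : ∀ x : X, ∃ hx : ℝ ≃ₜ ℝ, hx 0 = 0 ∧
      ∀ t : ℝ, f.symm (ψ t (f x)) = φ (hx t) x) :
    ∀ δ > 0, ∃ α > 0, ∀ z : Y,
      f.symm '' Gamma ψ α z ⊆ Gamma φ δ (f.symm z) := by
  intro δ hδ
  have hu : UniformContinuous (f.symm : Y → X) :=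
    CompactSpace.uniformContinuous_of_continuous f.symm.continuous
  obtain ⟨α, hα, hball⟩ := Metric.uniformContinuous_iff.mp hu δ hδ
  refine ⟨α / 2, by linarith, ?_⟩
  intro z x hx
  obtain ⟨y, hy, rfl⟩ := hx
  obtain ⟨h, hc, h0, hdist⟩ := hy
  obtain ⟨hx1, hx10, hx1e⟩ := hrep (f.symm z)
  obtain ⟨hx2, hx20, hx2e⟩ := hrep (f.symm y)
  refine ⟨fun s => hx2 (h (hx1.symm s)), by continuity, ?_, ?_⟩
  · have : hx1.symm 0 = 0 := by
      have := hx1.symm_apply_apply 0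
      rwa [hx10] at this
    simp only [this, h0, hx20]
  · intro s
    have key : dist (f.symm (ψ (hx1.symm s) z)) (f.symm (ψ (h (hx1.symm s)) y)) < δ := by
      apply hball
      calc dist (ψ (hx1.symm s) z) (ψ (h (hx1.symm s)) y) ≤ α / 2 := hdist _
        _ < α := by linarith
    have e1 : f.symm (ψ (hx1.symm s) z) = φ s (f.symm z) := by
      have := hx1e (hx1.symm s)
      rwa [f.apply_symm_apply, hx1.apply_symm_apply] at this
    have e2 : f.symm (ψ (h (hx1.symm s)) y) = φ (hx2 (h (hx1.symm s))) (f.symm y) := by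
      have := hx2e (h (hx1.symm s))
      rwa [f.apply_symm_apply] at this
    rw [e1, e2] at key
    exact key.le
end

section
/- Let f : X → Y be an equivalence between continuous flows φ on X and ψ on Y on compact metric spaces (with reparametrization homeomorphisms h_x as in the previous context). If a Borel measure μ is expansive for φ, then the pushforward f_*μ is expansive for ψ. -/
/-!
A point `y` in the `α`-dynamical ball of `z` follows the orbit of `z` up to a time change `h`.
Pulling both orbits back by `f⁻¹` reparametrizes them by the homeomorphisms `h_z` and `h_y`, so
`f⁻¹ y` follows the orbit of `f⁻¹ z` under the time change `h_y ∘ h ∘ h_z⁻¹`, and uniform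
continuity of `f⁻¹` on the compact space `Y` turns distance `≤ α` into distance `≤ δ`. Hence
`f⁻¹ (Γ_α(z)) ⊆ Γ_δ(f⁻¹ z)`, which is `μ`-null.
-/

open MeasureTheory

def MapsOrbitsUpToTimeChange {X Y : Type*} (ψ : ℝ → Y → Y) (φ : ℝ → X → X) (g : Y → X) :
    Prop :=
  ∀ y, ∃ h : ℝ ≃ₜ ℝ, h 0 = 0 ∧ ∀ t, g (ψ t y) = φ (h t) (g y)

lemma Homeomorph.mapsOrbitsUpToTimeChange_symm {X Y : Type*} [TopologicalSpace X]
    [TopologicalSpace Y] {φ : ℝ → X → X} {ψ : ℝ → Y → Y} (f : X ≃ₜ Y)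
    (hrep : ∀ x : X, ∃ h : ℝ ≃ₜ ℝ, h 0 = 0 ∧ ∀ t, f.symm (ψ t (f x)) = φ (h t) x) :
    MapsOrbitsUpToTimeChange ψ φ f.symm := by
  intro y
  simpa using hrep (f.symm y)

lemma mapsTo_Gamma_of_mapsOrbitsUpToTimeChange {X Y : Type*} [MetricSpace X] [MetricSpace Y]
    {φ : ℝ → X → X} {ψ : ℝ → Y → Y} {g : Y → X} {α δ : ℝ}
    (hg : MapsOrbitsUpToTimeChange ψ φ g)
    (hmod : ∀ ⦃a b : Y⦄, dist a b ≤ α → dist (g a) (g b) ≤ δ) (z : Y) :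
    Set.MapsTo g (Gamma ψ α z) (Gamma φ δ (g z)) := by
  rintro y ⟨h, hh, hh0, hdist⟩
  obtain ⟨hz, hz0, hgz⟩ := hg z
  obtain ⟨hy, hy0, hgy⟩ := hg y
  have hz_symm0 : hz.symm 0 = 0 := hz.symm_apply_eq.mpr hz0.symm
  refine ⟨hy ∘ h ∘ hz.symm, hy.continuous.comp (hh.comp hz.symm.continuous),
    by simp [hz_symm0, hh0, hy0], fun t => ?_⟩
  have := hmod (hdist (hz.symm t))
  rwa [hgz, hgy, hz.apply_symm_apply] at this

theorem pushforward_expansive_of_equivalence_general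
    {X Y : Type*} [MetricSpace X] [MeasurableSpace X] [BorelSpace X]
    [MetricSpace Y] [CompactSpace Y] [MeasurableSpace Y] [BorelSpace Y]
    (φ : ℝ → X → X) (ψ : ℝ → Y → Y)
    (f : X ≃ₜ Y)
    (hrep : ∀ x : X, ∃ hx : ℝ ≃ₜ ℝ, hx 0 = 0 ∧
      ∀ t : ℝ, f.symm (ψ t (f x)) = φ (hx t) x)
    (μ : Measure X)
    (hexp : ∃ δ > 0, ∀ x : X, μ (Gamma φ δ x) = 0) :
    ∃ α > 0, ∀ z : Y, (Measure.map f μ) (Gamma ψ α z) = 0 := by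
  obtain ⟨δ, hδ, hμ⟩ := hexp
  obtain ⟨α, hα, hmod⟩ := Metric.uniformContinuous_iff_le.mp
    (CompactSpace.uniformContinuous_of_continuous f.symm.continuous) δ hδ
  refine ⟨α, hα, fun z => ?_⟩
  rw [f.measurableEmbedding.map_apply]
  refine measure_mono_null (fun x hx => ?_) (hμ (f.symm z))
  simpa using mapsTo_Gamma_of_mapsOrbitsUpToTimeChange
    (f.mapsOrbitsUpToTimeChange_symm hrep) hmod z hx

/-- If `f` is an equivalence between continuous flows `φ` and `ψ` on compact metric
spaces and `μ` is expansive for `φ`, then `f_*μ` is expansive for `ψ`. -/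
theorem pushforward_expansive_of_equivalence
    {X Y : Type*} [MetricSpace X] [CompactSpace X] [MeasurableSpace X] [BorelSpace X]
    [MetricSpace Y] [CompactSpace Y] [MeasurableSpace Y] [BorelSpace Y]
    (φ : ℝ → X → X) (ψ : ℝ → Y → Y)
    (hcφ : Continuous fun p : ℝ × X => φ p.1 p.2)
    (hzφ : ∀ x, φ 0 x = x)
    (haφ : ∀ s t x, φ t (φ s x) = φ (t + s) x)
    (hcψ : Continuous fun p : ℝ × Y => ψ p.1 p.2)
    (hzψ : ∀ y, ψ 0 y = y)
    (haψ : ∀ s t y, ψ t (ψ s y) = ψ (t + s) y)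
    (f : X ≃ₜ Y)
    (horb : ∀ x : X, f '' Set.range (fun t : ℝ => φ t x)
      = Set.range fun t : ℝ => ψ t (f x))
    (hrep : ∀ x : X, ∃ hx : ℝ ≃ₜ ℝ, hx 0 = 0 ∧
      ∀ t : ℝ, f.symm (ψ t (f x)) = φ (hx t) x)
    (μ : Measure X)
    (hexp : ∃ δ > 0, ∀ x : X, μ (Gamma φ δ x) = 0) :
    ∃ α > 0, ∀ z : Y, (Measure.map f μ) (Gamma ψ α z) = 0 :=
  pushforward_expansive_of_equivalence_general φ ψ f hrep μ hexp
end

section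
/- Let φ be a continuous flow on a compact metric space X without singularities. A Borel probability measure μ on X is expansive for φ if and only if there exists α > 0 such that μ(Γ_α(x)) = 0 for μ-almost every x ∈ X. -/
open MeasureTheory

/-!
Only the converse needs an argument. It rests on the Bowen–Walters inclusion: for every `α > 0`
there is `δ > 0` with `Γ_δ(x) ⊆ Γ_α(y)` whenever `y ∈ Γ_δ(x)`. Then `Γ_δ(x)` either lies inside
some null set `Γ_α(y)`, or consists of points `y` with `μ(Γ_α(y)) ≠ 0`, which form a null set.

For the inclusion, let `g` and `h` be the reparametrizations putting `y` and `z` in `Γ_δ(x)`.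
A flow without singularities on a compact space has no periods in `(0, T]` for some `T > 0`, so it
displaces every point by a uniform `m > 0` at all times in `[ε, T]`. Hence, for `δ` small, `g`
drifts by at most `ε` from a translation over every time window of length `T`. The average of `g`
over such windows is then an increasing homeomorphism `e` of `ℝ` within `2ε` of `g`, and
`h ∘ e⁻¹` reparametrizes the orbit of `z` so that it shadows the orbit of `y`.
-/

open Set Filter Topology

section Reparametrization

variable {g : ℝ → ℝ} {T ε : ℝ}

theorem integral_comp_add_sub_integral_comp_add (hg : Continuous g) (t t' : ℝ) :
    (∫ s in 0..T, g (t' + s)) - ∫ s in 0..T, g (t + s) = ∫ u in t..t', (g (u + T) - g u) := by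
  have hshift : IntervalIntegrable (fun u => g (u + T)) volume t t' :=
    (hg.comp (continuous_add_const T)).intervalIntegrable _ _
  simp only [intervalIntegral.integral_comp_add_left, add_zero]
  rw [intervalIntegral.integral_interval_sub_interval_comm' (hg.intervalIntegrable _ _)
    (hg.intervalIntegrable _ _) (hg.intervalIntegrable _ _),
    intervalIntegral.integral_sub hshift (hg.intervalIntegrable _ _),
    intervalIntegral.integral_comp_add_right]

theorem abs_integral_comp_add_sub_le (hT : 0 ≤ T) (hg : Continuous g) {t : ℝ}
    (H : ∀ s ∈ Icc 0 T, |g (t + s) - g t - s| ≤ ε) :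
    |(∫ s in 0..T, g (t + s)) - T * g t - T ^ 2 / 2| ≤ ε * T := by
  have hint : IntervalIntegrable (fun s => g (t + s)) volume 0 T :=
    (hg.comp (continuous_const_add t)).intervalIntegrable _ _
  have key : (∫ s in 0..T, (g (t + s) - g t - s)) =
      (∫ s in 0..T, g (t + s)) - T * g t - T ^ 2 / 2 := by
    rw [intervalIntegral.integral_sub (hint.sub intervalIntegrable_const)
      intervalIntegral.intervalIntegrable_id,
      intervalIntegral.integral_sub hint intervalIntegrable_const, integral_id]
    simp
  rw [← key]
  simpa [abs_of_nonneg hT] using intervalIntegral.norm_integral_le_of_norm_le_const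
    (f := fun s => g (t + s) - g t - s)
    fun s hs => H s (Ioc_subset_Icc_self ((uIoc_of_le hT) ▸ hs))

theorem exists_orderIso_abs_sub_le (hg : Continuous g) (hT : 0 < T) (hεT : ε < T)
    (H : ∀ t s, 0 ≤ s → s ≤ T → |g (t + s) - g t - s| ≤ ε) :
    ∃ e : ℝ ≃o ℝ, e 0 = g 0 ∧ ∀ t, |e t - g t| ≤ 2 * ε := by
  set I : ℝ → ℝ := fun t => ∫ s in 0..T, g (t + s)
  set e₀ : ℝ → ℝ := fun t => (I t - I 0) / T + g 0
  have hI : ∀ t, |I t - T * g t - T ^ 2 / 2| ≤ ε * T := fun t =>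
    abs_integral_comp_add_sub_le hT.le hg fun s hs => H t s hs.1 hs.2
  have hslope : ∀ t t', t ≤ t' → (t' - t) * (T - ε) ≤ T * (e₀ t' - e₀ t) := by
    intro t t' htt'
    have hdiff : T * (e₀ t' - e₀ t) = ∫ u in t..t', (g (u + T) - g u) := by
      rw [← integral_comp_add_sub_integral_comp_add hg]
      simp only [e₀]
      field_simp
      ring
    rw [hdiff, ← smul_eq_mul, ← intervalIntegral.integral_const]
    refine intervalIntegral.integral_mono_on htt' intervalIntegrable_const
      (((hg.comp (continuous_add_const T)).sub hg).intervalIntegrable _ _) fun u _ => ?_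
    have := abs_le.1 (H u T hT.le le_rfl)
    linarith
  have hIcont : Continuous I :=
    intervalIntegral.continuous_parametric_intervalIntegral_of_continuous'
      (f := fun t s => g (t + s)) (by fun_prop) 0 T
  have hcont : Continuous e₀ := ((hIcont.sub continuous_const).div_const T).add continuous_const
  have hmono : StrictMono e₀ := fun t t' htt' => by
    nlinarith [hslope t t' htt'.le]
  have hsurj : Function.Surjective e₀ := by
    intro p
    set c := |p| + |g 0|
    have hb : T * c / (T - ε) * (T - ε) = T * c := div_mul_cancel₀ _ (sub_ne_zero.2 hεT.ne')
    have he₀ : e₀ 0 = g 0 := by simp [e₀]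
    have hup := hslope 0 (T * c / (T - ε)) (by positivity)
    have hlo := hslope (-(T * c / (T - ε))) 0 (neg_nonpos.2 (by positivity))
    rw [sub_zero, hb, he₀] at hup
    rw [zero_sub, neg_neg, hb, he₀] at hlo
    refine mem_range_of_exists_le_of_exists_ge hcont ⟨-(T * c / (T - ε)), ?_⟩
      ⟨T * c / (T - ε), ?_⟩
    · have : c ≤ g 0 - e₀ (-(T * c / (T - ε))) := le_of_mul_le_mul_left hlo hT
      linarith [neg_abs_le p, le_abs_self (g 0)]
    · have : c ≤ e₀ (T * c / (T - ε)) - g 0 := le_of_mul_le_mul_left hup hT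
      linarith [le_abs_self p, neg_abs_le (g 0)]
  refine ⟨StrictMono.orderIsoOfSurjective e₀ hmono hsurj, by simp [e₀], fun t => ?_⟩
  have herr :
      e₀ t - g t = ((I t - T * g t - T ^ 2 / 2) - (I 0 - T * g 0 - T ^ 2 / 2)) / T := by
    simp only [e₀]
    field_simp
    ring
  rw [StrictMono.coe_orderIsoOfSurjective, herr, abs_div, abs_of_pos hT, div_le_iff₀ hT]
  linarith [abs_sub (I t - T * g t - T ^ 2 / 2) (I 0 - T * g 0 - T ^ 2 / 2), hI t, hI 0]

end Reparametrization

namespace Flow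

variable {X : Type*}

section Topological

variable [TopologicalSpace X] (ϕ : Flow ℝ X)

theorem exists_abs_le_apply_eq {p : ℝ} {z : X}
    (hp : ϕ p z = z) (hp0 : p ≠ 0) (s : ℝ) : ∃ r, |r| ≤ |p| ∧ ϕ s z = ϕ r z := by
  let := ϕ.toAddAction
  have hperiod : ϕ (⌊s / p⌋ • p) z = z :=
    (AddAction.stabilizer ℝ z).zsmul_mem (AddAction.mem_stabilizer_iff.2 hp) _
  refine ⟨p * Int.fract (s / p), ?_, ?_⟩
  · rw [abs_mul, abs_of_nonneg (Int.fract_nonneg (s / p))]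
    exact mul_le_of_le_one_right (abs_nonneg p) (Int.fract_lt_one _).le
  · have hs : s = p * Int.fract (s / p) + ⌊s / p⌋ • p := by
      rw [Int.fract, zsmul_eq_mul]
      field_simp
      ring
    conv_lhs => rw [hs, ϕ.map_add, hperiod]

end Topological

section Metric

variable [MetricSpace X] (ϕ : Flow ℝ X)

theorem abs_reparam_add_sub_le {T ε m δ : ℝ} {x y : X} {g : ℝ → ℝ} (hε : 0 ≤ ε)
    (hεT : ε ≤ T) (hsep : ∀ z v, ε ≤ |v| → |v| ≤ T → m ≤ dist (ϕ v z) z)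
    (hunif : ∀ a b, dist a b ≤ δ → ∀ u, |u| ≤ T → dist (ϕ u a) (ϕ u b) + δ < m)
    (hg : Continuous g) (hclose : ∀ t, dist (ϕ t x) (ϕ (g t) y) ≤ δ) {t s : ℝ}
    (hs : |s| ≤ T) :
    |g (t + s) - g t - s| ≤ ε := by
  by_contra! hbig
  obtain ⟨u, hu, hwu⟩ : ∃ u ∈ uIcc 0 s, |g (t + u) - g t - u| = ε :=
    intermediate_value_uIcc (f := fun u => |g (t + u) - g t - u|) (by fun_prop)
      (by simpa using mem_uIcc_of_le hε hbig.le)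
  have huT : |u| ≤ T := by
    rcases mem_uIcc.1 hu with ⟨h₁, h₂⟩ | ⟨h₁, h₂⟩ <;> rw [abs_le] at hs ⊢ <;> constructor <;>
      linarith
  set v := g (t + u) - g t - u
  have hv : ϕ v (ϕ u (ϕ (g t) y)) = ϕ (g (t + u)) y := by
    rw [← ϕ.map_add, ← ϕ.map_add]
    congr 1
    ring
  -- `ϕ v` moves `ϕ u (ϕ (g t) y)` by at least `m`, but both points are close to `ϕ u (ϕ t x)`
  have hfar := hsep (ϕ u (ϕ (g t) y)) v hwu.ge (hwu.trans_le hεT)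
  rw [hv] at hfar
  have hnear : dist (ϕ u (ϕ t x)) (ϕ (g (t + u)) y) ≤ δ := by
    simpa only [← ϕ.map_add, add_comm u t] using hclose (t + u)
  linarith [hunif _ _ (hclose t) u huT,
    dist_triangle_left (ϕ (g (t + u)) y) (ϕ u (ϕ (g t) y)) (ϕ u (ϕ t x))]

variable [CompactSpace X]

theorem exists_dist_apply_lt_of_dist_lt (c : ℝ) {η : ℝ} (hη : 0 < η) :
    ∃ δ > 0, ∀ a b : X, dist a b < δ → ∀ u, |u| ≤ c → dist (ϕ u a) (ϕ u b) < η := by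
  obtain ⟨δ, hδ, h⟩ := Metric.uniformContinuousOn_iff.1
    ((isCompact_Icc.prod isCompact_univ).uniformContinuousOn_of_continuous
      (s := Icc (-c) c ×ˢ (univ : Set X)) ϕ.cont'.continuousOn) η hη
  refine ⟨δ, hδ, fun a b hab u hu =>
    h (u, a) ⟨abs_le.1 hu, trivial⟩ (u, b) ⟨abs_le.1 hu, trivial⟩ ?_⟩
  simpa [Prod.dist_eq] using hab

theorem exists_dist_apply_self_lt {η : ℝ} (hη : 0 < η) :
    ∃ r > 0, ∀ v, |v| < r → ∀ w : X, dist (ϕ v w) w < η := by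
  have : ∀ᶠ v in 𝓝 (0 : ℝ), ∀ w ∈ (univ : Set X), dist (ϕ v w) w < η :=
    isCompact_univ.eventually_forall_of_forall_eventually fun w _ => by
      have hc : Continuous fun q : ℝ × X => dist (ϕ q.1 q.2) q.2 := by fun_prop
      exact hc.continuousAt.eventually (gt_mem_nhds (by simpa using hη))
  obtain ⟨r, hr, h⟩ := Metric.eventually_nhds_iff.1 this
  exact ⟨r, hr, fun v hv w => h (by simpa using hv) w trivial⟩

theorem exists_no_small_periods (hnosing : ∀ x : X, ∃ t, ϕ t x ≠ x) :
    ∃ T > 0, ∀ z t, ϕ t z = z → |t| ≤ T → t = 0 := by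
  by_contra! h
  choose z p hper hle hne using fun n : ℕ => h (1 / (n + 1)) (by positivity)
  obtain ⟨z₀, ψ, hψ, hlim⟩ := CompactSpace.tendsto_subseq z
  obtain ⟨s, hs⟩ := hnosing z₀
  choose r hr hsr using fun n => ϕ.exists_abs_le_apply_eq (hper n) (hne n) s
  have hr0 : Tendsto r atTop (𝓝 0) :=
    squeeze_zero_norm (fun n => (hr n).trans (hle n)) tendsto_one_div_add_atTop_nhds_zero_nat
  have h1 : Tendsto (fun n => ϕ s (z (ψ n))) atTop (𝓝 (ϕ s z₀)) :=
    ((ϕ.continuous_toFun s).tendsto z₀).comp hlim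
  have h2 : Tendsto (fun n => ϕ s (z (ψ n))) atTop (𝓝 z₀) := by
    simp only [hsr]
    simpa [Function.comp_def] using
      (ϕ.cont'.tendsto (0, z₀)).comp ((hr0.comp hψ.tendsto_atTop).prodMk_nhds hlim)
  exact hs (tendsto_nhds_unique h1 h2)

theorem exists_pos_le_dist_apply_self {ε T : ℝ}
    (hmoved : ∀ z t, ε ≤ |t| → |t| ≤ T → ϕ t z ≠ z) :
    ∃ m > 0, ∀ z t, ε ≤ |t| → |t| ≤ T → m ≤ dist (ϕ t z) z := by
  have hK : IsCompact ({t : ℝ | ε ≤ |t| ∧ |t| ≤ T} ×ˢ (univ : Set X)) :=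
    (isCompact_Icc.of_isClosed_subset
      ((isClosed_le continuous_const continuous_abs).inter (isClosed_le continuous_abs
        continuous_const)) fun t ht => abs_le.1 ht.2).prod isCompact_univ
  obtain ⟨m, hm, hmK⟩ := hK.exists_forall_le' (f := fun q => dist (ϕ q.1 q.2) q.2)
    (by fun_prop) fun q hq => dist_pos.2 (hmoved q.2 q.1 hq.1.1 hq.1.2)
  exact ⟨m, hm, fun z t h₁ h₂ => hmK (t, z) ⟨⟨h₁, h₂⟩, trivial⟩⟩

theorem exists_abs_reparam_add_sub_le (hnosing : ∀ x : X, ∃ t, ϕ t x ≠ x) :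
    ∃ T > 0, ∀ ε, 0 < ε → ε ≤ T → ∃ δ > 0, ∀ (x y : X) (g : ℝ → ℝ), Continuous g →
      (∀ t, dist (ϕ t x) (ϕ (g t) y) ≤ δ) → ∀ t s, |s| ≤ T → |g (t + s) - g t - s| ≤ ε := by
  obtain ⟨T, hT, hper⟩ := ϕ.exists_no_small_periods hnosing
  refine ⟨T, hT, fun ε hε hεT => ?_⟩
  obtain ⟨m, hm, hsep⟩ := ϕ.exists_pos_le_dist_apply_self (ε := ε) (T := T)
    fun z t h₁ h₂ hz => not_le.2 hε (by simpa [hper z t hz h₂] using h₁)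
  obtain ⟨δ, hδ, hunif⟩ := ϕ.exists_dist_apply_lt_of_dist_lt T (half_pos hm)
  refine ⟨min (δ / 2) (m / 2), by positivity, fun x y g hg hclose t s hs =>
    ϕ.abs_reparam_add_sub_le hε.le hεT hsep (fun a b hab u hu => ?_) hg hclose hs⟩
  have hab' : dist a b < δ := by linarith [min_le_left (δ / 2) (m / 2)]
  linarith [hunif a b hab' u hu, min_le_right (δ / 2) (m / 2)]

theorem exists_Gamma_subset_Gamma (hnosing : ∀ x : X, ∃ t, ϕ t x ≠ x) {α : ℝ} (hα : 0 < α) :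
    ∃ δ > 0, ∀ x y, y ∈ Gamma ϕ δ x → Gamma ϕ δ x ⊆ Gamma ϕ α y := by
  obtain ⟨r, hr, hdisp⟩ := ϕ.exists_dist_apply_self_lt (half_pos hα)
  obtain ⟨T, hT, htransl⟩ := ϕ.exists_abs_reparam_add_sub_le hnosing
  set ε := min (T / 2) (r / 4)
  have hεT : ε < T := by linarith [min_le_left (T / 2) (r / 4)]
  have hεr : 2 * ε < r := by linarith [min_le_right (T / 2) (r / 4)]
  obtain ⟨δ, hδ, hδtransl⟩ := htransl ε (by positivity) hεT.le
  refine ⟨min δ (α / 4), by positivity, ?_⟩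
  rintro x y ⟨g, hg, hg0, hgx⟩ z ⟨h, hh, hh0, hhx⟩
  obtain ⟨e, he0, he⟩ := exists_orderIso_abs_sub_le hg hT hεT fun t s hs₀ hsT =>
    hδtransl x y g hg (fun t => (hgx t).trans (min_le_left _ _)) t s
      (abs_le.2 ⟨by linarith, hsT⟩)
  refine ⟨h ∘ e.symm, hh.comp e.symm.continuous, by
    simp only [Function.comp_apply, e.symm_apply_eq.2 (he0.trans hg0).symm, hh0], fun s => ?_⟩
  set t := e.symm s
  have hy : dist (ϕ s y) (ϕ (g t) y) < α / 2 := by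
    rw [show s = (s - g t) + g t by ring, ϕ.map_add]
    refine hdisp _ ?_ _
    rw [← e.apply_symm_apply s]
    linarith [he t]
  have hgx' : dist (ϕ (g t) y) (ϕ t x) ≤ α / 4 := by
    rw [dist_comm]
    exact (hgx t).trans (min_le_right _ _)
  have hhx' : dist (ϕ t x) (ϕ (h t) z) ≤ α / 4 := (hhx t).trans (min_le_right _ _)
  calc dist (ϕ s y) (ϕ (h t) z)
      ≤ dist (ϕ s y) (ϕ (g t) y) + dist (ϕ (g t) y) (ϕ t x) + dist (ϕ t x) (ϕ (h t) z) :=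
        dist_triangle4 _ _ _ _
    _ ≤ α := by linarith

end Metric

end Flow

theorem measure_eq_zero_of_forall_mem_subset {α : Type*} [MeasurableSpace α]
    {μ : Measure α} {s : Set α} {A : α → Set α} (hsub : ∀ y ∈ s, s ⊆ A y)
    (hA : ∀ᵐ y ∂μ, μ (A y) = 0) :
    μ s = 0 := by
  by_cases h : ∃ y ∈ s, μ (A y) = 0
  · obtain ⟨y, hy, hy0⟩ := h
    exact measure_mono_null (hsub y hy) hy0
  · exact measure_mono_null (fun y hy hy0 => h ⟨y, hy, hy0⟩) (ae_iff.1 hA)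

theorem expansive_iff_ae_general
    {X : Type*} [MetricSpace X] [CompactSpace X] [MeasurableSpace X]
    (φ : ℝ → X → X)
    (hcont : Continuous fun p : ℝ × X => φ p.1 p.2)
    (hzero : ∀ x, φ 0 x = x)
    (hadd : ∀ s t x, φ t (φ s x) = φ (t + s) x)
    (hnosing : ∀ x : X, ∃ t : ℝ, φ t x ≠ x)
    (μ : Measure X) :
    (∃ δ > 0, ∀ x : X, μ (Gamma φ δ x) = 0) ↔
      (∃ α > 0, ∀ᵐ x ∂μ, μ (Gamma φ α x) = 0) := by
  let ϕ : Flow ℝ X := ⟨φ, hcont, fun t₁ t₂ x => (hadd t₂ t₁ x).symm, hzero⟩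
  refine ⟨fun ⟨δ, hδ, h⟩ => ⟨δ, hδ, ae_of_all μ h⟩, fun ⟨α, hα, hae⟩ => ?_⟩
  obtain ⟨δ, hδ, hsub⟩ := ϕ.exists_Gamma_subset_Gamma hnosing hα
  exact ⟨δ, hδ, fun x => measure_eq_zero_of_forall_mem_subset (hsub x) hae⟩

/-- For a continuous flow without singularities of a compact metric space, a Borel
probability measure is expansive iff `μ(Γ_α(x)) = 0` for `μ`-a.e. `x`, for some `α > 0`. -/
theorem expansive_iff_ae
    {X : Type*} [MetricSpace X] [CompactSpace X] [MeasurableSpace X] [BorelSpace X]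
    (φ : ℝ → X → X)
    (hcont : Continuous fun p : ℝ × X => φ p.1 p.2)
    (hzero : ∀ x, φ 0 x = x)
    (hadd : ∀ s t x, φ t (φ s x) = φ (t + s) x)
    (hnosing : ∀ x : X, ∃ t : ℝ, φ t x ≠ x)
    (μ : Measure X) [IsProbabilityMeasure μ] :
    (∃ δ > 0, ∀ x : X, μ (Gamma φ δ x) = 0) ↔
      (∃ α > 0, ∀ᵐ x ∂μ, μ (Gamma φ α x) = 0) :=
  expansive_iff_ae_general φ hcont hzero hadd hnosing μ
end

section
/- Let φ be a continuous flow without singularities on a compact metric space X. For every α > 0 there exists δ > 0 such that whenever x, y ∈ X satisfy y ∈ Γ_δ(x), one has Γ_δ(x) ⊆ Γ_α(y). -/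
open Set Filter

section aux
variable {X : Type*} [MetricSpace X] [CompactSpace X] (φ : ℝ → X → X)

lemma exists_move (hzero : ∀ x, φ 0 x = x) (hadd : ∀ s t x, φ t (φ s x) = φ (t + s) x)
    (hnosing : ∀ x : X, ∃ t : ℝ, φ t x ≠ x) (z : X) :
    ∃ s ∈ Icc (0:ℝ) 1, φ s z ≠ z := by
  by_contra hcon
  push_neg at hcon
  have key : ∀ n : ℕ, ∀ t : ℝ, 0 ≤ t → t ≤ n → φ t z = z := by
    intro n
    induction n with
    | zero =>
      intro t ht0 ht1
      have : t = 0 := le_antisymm (by exact_mod_cast ht1) ht0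
      simp [this, hzero]
    | succ n ih =>
      intro t ht0 ht1
      by_cases hle : t ≤ n
      · exact ih t ht0 hle
      · push_neg at hle
        have h1 : φ (t - n) z = z := by
          apply hcon
          constructor
          · linarith
          · push_cast at ht1 ⊢; linarith
        have h2 : φ (n:ℝ) z = z := ih n (by positivity) le_rfl
        have e := hadd (n:ℝ) (t - n) z
        rw [h2, h1, show t - (n:ℝ) + n = t by ring] at e
        exact e.symm
  have hall : ∀ t : ℝ, φ t z = z := by
    have hpos : ∀ t : ℝ, 0 ≤ t → φ t z = z := fun t ht =>
      key ⌈t⌉₊ t ht (Nat.le_ceil t)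
    intro t
    rcases le_or_gt 0 t with ht | ht
    · exact hpos t ht
    · have h3 : φ (-t) z = z := hpos (-t) (by linarith)
      calc φ t z = φ t (φ (-t) z) := by rw [h3]
        _ = φ (t + -t) z := hadd (-t) t z
        _ = z := by rw [add_neg_cancel, hzero]
  obtain ⟨t, htne⟩ := hnosing z
  exact htne (hall t)

lemma sep1 [Nonempty X] (hcont : Continuous fun p : ℝ × X => φ p.1 p.2)
    (hzero : ∀ x, φ 0 x = x) (hadd : ∀ s t x, φ t (φ s x) = φ (t + s) x)
    (hnosing : ∀ x : X, ∃ t : ℝ, φ t x ≠ x) :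
    ∃ ε > 0, ∀ z : X, ∃ s ∈ Icc (0:ℝ) 1, ε ≤ dist (φ s z) z := by
  have hmv := exists_move φ hzero hadd hnosing
  choose s hs hne using hmv
  set r : X → ℝ := fun z => dist (φ (s z) z) z with hr
  have hrpos : ∀ z, 0 < r z := fun z => dist_pos.2 (hne z)
  set U : X → Set X := fun z => {w | r z / 2 < dist (φ (s z) w) w} with hU
  have hUopen : ∀ z, IsOpen (U z) := by
    intro z
    have hc : Continuous fun w => dist (φ (s z) w) w :=
      (hcont.comp (continuous_const.prodMk continuous_id)).dist continuous_id
    exact isOpen_lt continuous_const hc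
  have hcover : (univ : Set X) ⊆ ⋃ z, U z := by
    intro w _
    refine mem_iUnion.2 ⟨w, ?_⟩
    show r w / 2 < dist (φ (s w) w) w
    linarith [hrpos w]
  obtain ⟨t, ht⟩ := isCompact_univ.elim_finite_subcover U hUopen hcover
  have htne : t.Nonempty := by
    obtain ⟨w⟩ := ‹Nonempty X›
    rcases mem_iUnion₂.1 (ht (mem_univ w)) with ⟨i, hi, _⟩
    exact ⟨i, hi⟩
  refine ⟨t.inf' htne (fun i => r i / 2), ?_, ?_⟩
  · exact (Finset.lt_inf'_iff _).2 fun i _ => half_pos (hrpos i)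
  · intro z
    rcases mem_iUnion₂.1 (ht (mem_univ z)) with ⟨i, hit, hiz⟩
    exact ⟨s i, hs i, le_trans (Finset.inf'_le _ hit) (le_of_lt hiz)⟩

lemma unif (hcont : Continuous fun p : ℝ × X => φ p.1 p.2) :
    ∀ η > 0, ∃ κ > 0, ∀ (u v : ℝ) (a b : X), |u| ≤ 1 → |v| ≤ 1 → |u - v| ≤ κ →
      dist a b ≤ κ → dist (φ u a) (φ v b) ≤ η := by
  intro η hη
  have hK : IsCompact (Icc (-1:ℝ) 1 ×ˢ (univ : Set X)) := isCompact_Icc.prod isCompact_univ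
  have huc := hK.uniformContinuousOn_of_continuous hcont.continuousOn
  rw [Metric.uniformContinuousOn_iff] at huc
  obtain ⟨κ, hκ, hp⟩ := huc η hη
  refine ⟨κ/2, half_pos hκ, ?_⟩
  intro u v a b hu hv huv hab
  have h1 : ((u, a) : ℝ × X) ∈ Icc (-1:ℝ) 1 ×ˢ (univ : Set X) :=
    ⟨⟨(abs_le.1 hu).1, (abs_le.1 hu).2⟩, mem_univ a⟩
  have h2 : ((v, b) : ℝ × X) ∈ Icc (-1:ℝ) 1 ×ˢ (univ : Set X) :=
    ⟨⟨(abs_le.1 hv).1, (abs_le.1 hv).2⟩, mem_univ b⟩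
  have hd : dist ((u, a) : ℝ × X) (v, b) < κ := by
    rw [Prod.dist_eq]
    apply max_lt
    · rw [Real.dist_eq]; linarith
    · exact lt_of_le_of_lt hab (by linarith)
  exact le_of_lt (hp _ h1 _ h2 hd)

lemma no_short_period (hzero : ∀ x, φ 0 x = x) (hadd : ∀ s t x, φ t (φ s x) = φ (t + s) x)
    {ε1 τ0 : ℝ} (hε1 : 0 < ε1)
    (hsmall : ∀ (z : X) (u : ℝ), |u| ≤ τ0 → dist (φ u z) z ≤ ε1/2)
    (hsep : ∀ z : X, ∃ s ∈ Icc (0:ℝ) 1, ε1 ≤ dist (φ s z) z) :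
    ∀ (z : X) (p : ℝ), 0 < p → p ≤ τ0 → φ p z ≠ z := by
  intro z p hp hpτ hper
  have hk : ∀ k : ℕ, φ ((k:ℝ) * p) z = z := by
    intro k
    induction k with
    | zero => simp [hzero]
    | succ k ih =>
      have e := hadd p ((k:ℝ) * p) z
      rw [hper, ih] at e
      push_cast
      rw [show ((k:ℝ)+1) * p = (k:ℝ)*p + p by ring]
      exact e.symm
  have hall : ∀ t ∈ Icc (0:ℝ) 1, dist (φ t z) z ≤ ε1/2 := by
    rintro t ⟨ht0, _⟩
    set k := ⌊t / p⌋₊ with hkdef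
    have hk1 : (k:ℝ) * p ≤ t := by
      have h := Nat.floor_le (div_nonneg ht0 hp.le)
      calc (k:ℝ) * p ≤ (t/p) * p := mul_le_mul_of_nonneg_right h hp.le
        _ = t := div_mul_cancel₀ t hp.ne'
    have hk2 : t < ((k:ℝ)+1) * p := by
      have h := Nat.lt_floor_add_one (t/p)
      calc t = (t/p) * p := (div_mul_cancel₀ t hp.ne').symm
        _ < ((k:ℝ)+1) * p := by
            apply mul_lt_mul_of_pos_right _ hp
            exact_mod_cast h
    have heq : φ t z = φ (t - (k:ℝ)*p) z := by
      have e := hadd ((k:ℝ)*p) (t - (k:ℝ)*p) z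
      rw [hk k, show t - (k:ℝ)*p + (k:ℝ)*p = t by ring] at e
      exact e.symm
    rw [heq]
    apply hsmall
    rw [abs_of_nonneg (by linarith)]
    nlinarith
  obtain ⟨s, hs, hd⟩ := hsep z
  linarith [hall s hs]

end aux
section aux2
variable {X : Type*} [MetricSpace X] (φ : ℝ → X → X)

set_option linter.unusedSectionVars false

lemma local_control (hadd : ∀ s t x, φ t (φ s x) = φ (t + s) x)
    {τ ε2 κ δ : ℝ} (hτ : 0 < τ) (hτ1 : τ ≤ 1) (hε2 : 0 < ε2)
    (hsep : ∀ (z : X) (u : ℝ), τ/2 ≤ |u| → |u| ≤ τ → ε2 ≤ dist (φ u z) z)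
    (hκp : ∀ (w : ℝ) (a b : X), |w| ≤ 1 → dist a b ≤ κ → dist (φ w a) (φ w b) ≤ ε2/4)
    (hδκ : δ ≤ κ) (hδε : δ ≤ ε2/4)
    {x y : X} {h : ℝ → ℝ} (hhc : Continuous h)
    (hh : ∀ t, dist (φ t x) (φ (h t) y) ≤ δ) :
    ∀ t u : ℝ, |u - t| ≤ τ → |h u - h t - (u - t)| < τ/2 := by
  intro t u htu
  set g : ℝ → ℝ := fun v => h v - h t - (v - t) with hg
  have hgc : Continuous g := (hhc.sub continuous_const).sub (continuous_id.sub continuous_const)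
  have step1 : ∀ v, |v - t| ≤ τ → ¬ (τ/2 ≤ |g v| ∧ |g v| ≤ τ) := by
    rintro v hv ⟨hg1, hg2⟩
    have hzdef : φ (g v) (φ (h t + (v - t)) y) = φ (h v) y := by
      rw [hadd]; congr 1; simp only [hg]; ring
    have e1 : dist (φ (h v) y) (φ v x) ≤ δ := by rw [dist_comm]; exact hh v
    have e2 : dist (φ v x) (φ (h t + (v - t)) y) ≤ ε2/4 := by
      have hx : φ (v - t) (φ t x) = φ v x := by rw [hadd]; congr 1; ring
      have hy : φ (v - t) (φ (h t) y) = φ (h t + (v - t)) y := by rw [hadd]; congr 1; ring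
      rw [← hx, ← hy]
      exact hκp _ _ _ (le_trans hv hτ1) (le_trans (hh t) hδκ)
    have e3 : dist (φ (g v) (φ (h t + (v - t)) y)) (φ (h t + (v - t)) y) ≤ δ + ε2/4 := by
      rw [hzdef]
      calc dist (φ (h v) y) (φ (h t + (v - t)) y)
          ≤ dist (φ (h v) y) (φ v x) + dist (φ v x) (φ (h t + (v - t)) y) := dist_triangle _ _ _
        _ ≤ δ + ε2/4 := add_le_add e1 e2
    have e4 := hsep (φ (h t + (v - t)) y) (g v) hg1 hg2
    linarith
  by_contra hcon
  push_neg at hcon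
  have hgu : τ < |g u| := by
    rcases lt_or_ge τ |g u| with hlt | hle
    · exact hlt
    · exact absurd ⟨hcon, hle⟩ (step1 u htu)
  have hivt := intermediate_value_uIcc (a := t) (b := u) (f := fun v => |g v|)
    (hgc.abs.continuousOn)
  have hmem : (3*τ/4) ∈ Set.uIcc |g t| |g u| := by
    have hgt0 : |g t| = 0 := by simp [hg]
    rw [hgt0, Set.mem_uIcc]
    left
    constructor <;> [positivity; linarith]
  obtain ⟨v, hvmem, hveq⟩ := hivt hmem
  have hvt : |v - t| ≤ τ := by
    rcases Set.mem_uIcc.1 hvmem with ⟨hv1, hv2⟩ | ⟨hv1, hv2⟩ <;>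
      · rcases abs_le.1 htu with ⟨ha, hb⟩
        rw [abs_le]
        constructor <;> linarith
  simp only at hveq
  exact absurd ⟨by rw [hveq]; linarith, by rw [hveq]; linarith⟩ (step1 v hvt)

end aux2

lemma rectify {τ : ℝ} (hτ : 0 < τ) {h : ℝ → ℝ} (hhc : Continuous h) (hh0 : h 0 = 0)
    (hM : ∀ t u : ℝ, |u - t| ≤ τ → |h u - h t - (u - t)| < τ/2) :
    ∃ g : ℝ → ℝ, StrictMono g ∧ Continuous g ∧ Function.Surjective g ∧ g 0 = 0 ∧
      ∀ t, |g t - h t| ≤ 3*τ := by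
  set F : ℝ → ℝ := fun t => ∫ s in (0:ℝ)..t, h s with hF
  have hFc : Continuous F :=
    intervalIntegral.continuous_primitive (fun a b => hhc.intervalIntegrable a b) 0
  set g : ℝ → ℝ := fun t => (F (t + τ) - F t - F τ)/τ with hgdef
  have hgc : Continuous g :=
    (((hFc.comp (continuous_id.add continuous_const)).sub hFc).sub continuous_const).div_const τ
  have hFsub : ∀ a b : ℝ, F b - F a = ∫ s in a..b, h s := fun a b =>
    intervalIntegral.integral_interval_sub_left (hhc.intervalIntegrable _ _)
      (hhc.intervalIntegrable _ _)
  have hdiff : ∀ t1 t2 : ℝ, t1 ≤ t2 → (t2 - t1)/2 ≤ g t2 - g t1 := by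
    intro t1 t2 h12
    have e1 : g t2 - g t1 = ((F (t2+τ) - F (t1+τ)) - (F t2 - F t1))/τ := by
      simp only [hgdef]; ring
    have e4 : (∫ s in t1..t2, h (s + τ)) = ∫ s in t1+τ..t2+τ, h s :=
      intervalIntegral.integral_comp_add_right h τ
    have e5 : (∫ s in t1..t2, (h (s+τ) - h s)) = (∫ s in t1..t2, h (s+τ)) - ∫ s in t1..t2, h s :=
      intervalIntegral.integral_sub
        ((hhc.comp (continuous_id.add continuous_const)).intervalIntegrable _ _)
        (hhc.intervalIntegrable _ _)
    have e6 : (t2 - t1) * (τ/2) ≤ ∫ s in t1..t2, (h (s+τ) - h s) := by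
      have hc : (∫ _s in t1..t2, (τ/2 : ℝ)) = (t2 - t1) * (τ/2) := by
        simp [intervalIntegral.integral_const, smul_eq_mul]
        ring
      rw [← hc]
      apply intervalIntegral.integral_mono_on h12 intervalIntegrable_const
        (((hhc.comp (continuous_id.add continuous_const)).sub hhc).intervalIntegrable _ _)
      intro s _
      show (τ/2 : ℝ) ≤ h (s + τ) - h s
      have hbig := hM s (s + τ) (by rw [show s + τ - s = τ by ring, abs_of_pos hτ])
      rw [show s + τ - s = τ by ring] at hbig
      rcases abs_lt.1 hbig with ⟨hb1, _⟩
      linarith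
    have e7 : (t2 - t1) * (τ/2) ≤ (F (t2+τ) - F (t1+τ)) - (F t2 - F t1) := by
      rw [hFsub (t1+τ) (t2+τ), hFsub t1 t2, ← e4, ← e5]; exact e6
    rw [e1, le_div_iff₀ hτ]
    nlinarith
  have hmono : StrictMono g := fun a b hab => by
    have := hdiff a b hab.le; linarith
  have hg0 : g 0 = 0 := by
    simp only [hgdef, hF, zero_add, intervalIntegral.integral_same]
    ring
  have hbound : ∀ t, |g t - h t| ≤ 3*τ := by
    intro t
    have c1 : F (t+τ) - F t = ∫ s in t..t+τ, h s := hFsub t (t+τ)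
    have c2 : (∫ s in t..t+τ, (h s - h t)) = (∫ s in t..t+τ, h s) - τ * h t := by
      rw [intervalIntegral.integral_sub (hhc.intervalIntegrable _ _) intervalIntegrable_const]
      simp [intervalIntegral.integral_const, smul_eq_mul]
    have b1 : |∫ s in t..t+τ, (h s - h t)| ≤ (3*τ/2) * |(t+τ) - t| := by
      rw [← Real.norm_eq_abs]
      apply intervalIntegral.norm_integral_le_of_norm_le_const
      intro s hs
      rw [Set.uIoc_of_le (by linarith)] at hs
      have hst : |s - t| ≤ τ := by
        rw [abs_of_nonneg (by linarith [hs.1.le])]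
        linarith [hs.2]
      have := hM t s hst
      rcases abs_lt.1 this with ⟨hb1, hb2⟩
      rw [Real.norm_eq_abs, abs_le]
      rcases abs_le.1 hst with ⟨ha, hb⟩
      constructor <;> linarith
    have b2 : |F τ| ≤ (3*τ/2) * |τ - 0| := by
      have : F τ = ∫ s in (0:ℝ)..τ, h s := by simp [hF]
      rw [this, ← Real.norm_eq_abs]
      apply intervalIntegral.norm_integral_le_of_norm_le_const
      intro s hs
      rw [Set.uIoc_of_le (by linarith)] at hs
      have hst : |s - 0| ≤ τ := by
        rw [sub_zero, abs_of_nonneg hs.1.le]; exact hs.2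
      have := hM 0 s hst
      rw [hh0] at this
      rcases abs_lt.1 this with ⟨hb1', hb2'⟩
      rw [Real.norm_eq_abs, abs_le]
      constructor <;> [nlinarith [hs.1.le, hs.2]; nlinarith [hs.1.le, hs.2]]
    have keyeq : g t - h t = ((∫ s in t..t+τ, (h s - h t)) - F τ)/τ := by
      rw [c2, ← c1]
      simp only [hgdef]
      field_simp
      ring
    rw [keyeq, abs_div, abs_of_pos hτ, div_le_iff₀ hτ]
    have htri : |(∫ s in t..t+τ, (h s - h t)) - F τ| ≤
        |∫ s in t..t+τ, (h s - h t)| + |F τ| := abs_sub _ _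
    rw [show |t + τ - t| = τ by rw [show t + τ - t = τ by ring]; exact abs_of_pos hτ] at b1
    rw [show |τ - (0:ℝ)| = τ by rw [sub_zero]; exact abs_of_pos hτ] at b2
    nlinarith [htri]
  have hhalf_top : Filter.Tendsto (fun t : ℝ => t/2) Filter.atTop Filter.atTop :=
    Filter.tendsto_id.atTop_div_const (by norm_num)
  have hhalf_bot : Filter.Tendsto (fun t : ℝ => t/2) Filter.atBot Filter.atBot :=
    Filter.tendsto_id.atBot_div_const (by norm_num)
  have htop : Filter.Tendsto g Filter.atTop Filter.atTop := by
    apply tendsto_atTop_mono' Filter.atTop _ hhalf_top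
    filter_upwards [Filter.eventually_ge_atTop (0:ℝ)] with t ht
    have := hdiff 0 t ht
    rw [hg0] at this
    linarith
  have hbot : Filter.Tendsto g Filter.atBot Filter.atBot := by
    apply tendsto_atBot_mono' Filter.atBot _ hhalf_bot
    filter_upwards [Filter.eventually_le_atBot (0:ℝ)] with t ht
    have := hdiff t 0 ht
    rw [hg0] at this
    linarith
  exact ⟨g, hmono, hgc, hgc.surjective htop hbot, hg0, hbound⟩
/-- For a continuous flow without singularities of a compact metric space: for every
`α > 0` there is `δ > 0` such that `y ∈ Γ_δ(x)` implies `Γ_δ(x) ⊆ Γ_α(y)`. -/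
theorem Gamma_nested
    {X : Type*} [MetricSpace X] [CompactSpace X]
    (φ : ℝ → X → X)
    (hcont : Continuous fun p : ℝ × X => φ p.1 p.2)
    (hzero : ∀ x, φ 0 x = x)
    (hadd : ∀ s t x, φ t (φ s x) = φ (t + s) x)
    (hnosing : ∀ x : X, ∃ t : ℝ, φ t x ≠ x) :
    ∀ α > 0, ∃ δ > 0, ∀ x y : X, y ∈ Gamma φ δ x → Gamma φ δ x ⊆ Gamma φ α y := by
  intro α hα
  rcases isEmpty_or_nonempty X with hempty | hne
  · exact ⟨1, one_pos, fun x => (IsEmpty.false x).elim⟩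
  -- Step 1: every point moves ε1 within time 1
  obtain ⟨ε1, hε1, hsep1⟩ := sep1 φ hcont hzero hadd hnosing
  -- small-time control
  have smalltime : ∀ η > (0:ℝ), ∃ τ' > (0:ℝ), τ' ≤ 1 ∧
      ∀ (z : X) (u : ℝ), |u| ≤ τ' → dist (φ u z) z ≤ η := by
    intro η hη
    obtain ⟨κ, hκ, hp⟩ := unif φ hcont η hη
    refine ⟨min κ 1, lt_min hκ one_pos, min_le_right _ _, ?_⟩
    intro z u hu
    have h1 : |u| ≤ 1 := le_trans hu (min_le_right _ _)
    have h2 : |u - 0| ≤ κ := by rw [sub_zero]; exact le_trans hu (min_le_left _ _)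
    have := hp u 0 z z h1 (by norm_num) h2 (by simp [hκ.le])
    rwa [hzero] at this
  obtain ⟨τ0, hτ0, hτ01, hτ0p⟩ := smalltime (ε1/2) (half_pos hε1)
  obtain ⟨τα, hταpos, hτα1, hταp⟩ := smalltime (α/4) (by positivity)
  set τ : ℝ := min τ0 (τα/3) with hτdef
  have hτ : 0 < τ := lt_min hτ0 (by positivity)
  have hτ1 : τ ≤ 1 := le_trans (min_le_left _ _) hτ01
  -- Step 2: no short periods
  have hper : ∀ (z : X) (p : ℝ), 0 < p → p ≤ τ → φ p z ≠ z := fun z p h1 h2 =>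
    no_short_period φ hzero hadd hε1 hτ0p hsep1 z p h1 (le_trans h2 (min_le_left _ _))
  -- Step 3: uniform separation at scale [τ/2, τ]
  obtain ⟨ε2, hε2, hsep2⟩ : ∃ ε2 > 0, ∀ (z : X) (u : ℝ), τ/2 ≤ |u| → |u| ≤ τ →
      ε2 ≤ dist (φ u z) z := by
    have hKc : IsCompact (Set.Icc (τ/2) τ ×ˢ (Set.univ : Set X)) :=
      isCompact_Icc.prod isCompact_univ
    have hKne : (Set.Icc (τ/2) τ ×ˢ (Set.univ : Set X)).Nonempty :=
      ⟨(τ/2, Classical.arbitrary X), ⟨⟨le_rfl, by linarith⟩, Set.mem_univ _⟩⟩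
    have hfc : ContinuousOn (fun p : ℝ × X => dist (φ p.1 p.2) p.2)
        (Set.Icc (τ/2) τ ×ˢ (Set.univ : Set X)) := (hcont.dist continuous_snd).continuousOn
    obtain ⟨⟨u0, z0⟩, hmem, hmin⟩ := hKc.exists_isMinOn hKne hfc
    rw [isMinOn_iff] at hmin
    obtain ⟨⟨hu01, hu02⟩, -⟩ := hmem
    have hu0pos : 0 < u0 := lt_of_lt_of_le (by linarith) hu01
    refine ⟨dist (φ u0 z0) z0, dist_pos.2 (hper z0 u0 hu0pos hu02), ?_⟩
    intro z u h1 h2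
    rcases le_or_gt 0 u with hu | hu
    · rw [abs_of_nonneg hu] at h1 h2
      exact hmin (u, z) ⟨⟨h1, h2⟩, Set.mem_univ z⟩
    · rw [abs_of_neg hu] at h1 h2
      have hback : φ (-u) (φ u z) = z := by
        rw [hadd, neg_add_cancel, hzero]
      have : dist (φ u z) z = dist (φ (-u) (φ u z)) (φ u z) := by
        rw [hback, dist_comm]
      rw [this]
      exact hmin (-u, φ u z) ⟨⟨h1, h2⟩, Set.mem_univ _⟩
  -- Step 4: choose δ
  obtain ⟨κ, hκpos, hκp⟩ := unif φ hcont (ε2/4) (by positivity)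
  have hκp' : ∀ (w : ℝ) (a b : X), |w| ≤ 1 → dist a b ≤ κ → dist (φ w a) (φ w b) ≤ ε2/4 :=
    fun w a b hw hab => hκp w w a b hw hw (by simp [hκpos.le]) hab
  set δ : ℝ := min (min κ (ε2/4)) (α/4) with hδdef
  have hδ : 0 < δ := lt_min (lt_min hκpos (by positivity)) (by positivity)
  refine ⟨δ, hδ, ?_⟩
  rintro x y ⟨h1, h1c, h10, h1d⟩ z ⟨h2, h2c, h20, h2d⟩
  have hδκ : δ ≤ κ := le_trans (min_le_left _ _) (min_le_left _ _)
  have hδε : δ ≤ ε2/4 := le_trans (min_le_left _ _) (min_le_right _ _)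
  have hδα : δ ≤ α/4 := min_le_right _ _
  -- rectify h1
  have hM := local_control φ hadd hτ hτ1 hε2 hsep2 hκp' hδκ hδε h1c h1d
  obtain ⟨g, hgmono, hgc, hgsurj, hg0, hgb⟩ := rectify hτ h1c h10 hM
  set e := StrictMono.orderIsoOfSurjective g hgmono hgsurj with he
  have hecoe : ∀ t, e t = g t := fun t => by
    rw [he, StrictMono.coe_orderIsoOfSurjective]
  refine ⟨fun s => h2 (e.symm s), h2c.comp e.symm.continuous, ?_, ?_⟩
  · have hs0 : e.symm (0:ℝ) = 0 := by
      have h0 : e (0:ℝ) = 0 := by rw [hecoe]; exact hg0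
      rw [OrderIso.symm_apply_eq]
      exact h0.symm
    simp only [hs0, h20]
  · intro s
    set t := e.symm s with ht
    have hgt : g t = s := by rw [← hecoe]; exact e.apply_symm_apply s
    have d3 : dist (φ t x) (φ (h2 t) z) ≤ δ := h2d t
    have d2 : dist (φ (h1 t) y) (φ t x) ≤ δ := by rw [dist_comm]; exact h1d t
    have d1 : dist (φ s y) (φ (h1 t) y) ≤ α/4 := by
      have hrw : φ (g t - h1 t) (φ (h1 t) y) = φ s y := by
        rw [hadd, sub_add_cancel, hgt]
      rw [← hrw]
      apply hταp
      have hb := hgb t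
      have h3τ : 3*τ ≤ τα := by
        have : τ ≤ τα/3 := min_le_right _ _
        linarith
      exact le_trans hb h3τ
    calc dist (φ s y) (φ (h2 t) z)
        ≤ dist (φ s y) (φ (h1 t) y) + dist (φ (h1 t) y) (φ t x) + dist (φ t x) (φ (h2 t) z) :=
          dist_triangle4 _ _ _ _
      _ ≤ α/4 + δ + δ := by gcongr
      _ ≤ α := by linarith
end

section
/- Let φ be a continuous flow on a compact metric space X. For every δ > 0 and t > 0 there exist α₀, β₀ ∈ (0, min{δ, 2t}) such that: if x, y ∈ X satisfy φ_a(x) = x and φ_b(y) = y for some a, b ∈ [t − α/2, t + α/2], and d(x, y) ≤ β, where 0 < α < α₀ and 0 < β < β₀, then y ∈ Γ_δ(x). -/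
open Function Set

lemma periodic_flow_apply {X : Type*} {φ : ℝ → X → X}
    (hadd : ∀ s t x, φ t (φ s x) = φ (t + s) x) {a : ℝ} {x : X} (hx : φ a x = x) :
    Periodic (fun s => φ s x) a := fun s => by
  simp only [← hadd, hx]

lemma Function.Periodic.dist_le_of_forall_mem_Ico {X : Type*} [PseudoMetricSpace X]
    {f g : ℝ → X} {a b δ : ℝ} (hf : Periodic f a) (hg : Periodic g b) (ha : 0 < a)
    (h : ∀ r ∈ Ico 0 a, dist (f r) (g (b / a * r)) ≤ δ) (s : ℝ) :
    dist (f s) (g (b / a * s)) ≤ δ := by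
  have hF : Periodic (fun s => dist (f s) (g (b / a * s))) a := fun s => by
    simp only [mul_add, div_mul_cancel₀ b ha.ne', hf s, hg _]
  obtain ⟨r, hr, hsr⟩ := hF.exists_mem_Ico₀ ha s
  exact hsr ▸ h r hr

lemma abs_sub_div_mul_le {a b r : ℝ} (ha : 0 < a) (hr : r ∈ Icc 0 a) :
    |r - b / a * r| ≤ |a - b| := by
  have hra : |r / a| ≤ 1 := by
    rw [abs_div, abs_of_nonneg hr.1, abs_of_pos ha]
    exact div_le_one_of_le₀ hr.2 ha.le
  calc |r - b / a * r| = |a - b| * |r / a| := by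
        rw [← abs_mul]; congr 1; field_simp
    _ ≤ |a - b| := mul_le_of_le_one_right (abs_nonneg _) hra

lemma exists_dist_apply_lt_of_compactSpace {X Y : Type*} [PseudoMetricSpace X] [CompactSpace X]
    [PseudoMetricSpace Y] {φ : ℝ → X → Y} (hcont : Continuous fun p : ℝ × X => φ p.1 p.2)
    (T : ℝ) {ε : ℝ} (hε : 0 < ε) :
    ∃ η > 0, ∀ r ∈ Icc 0 T, ∀ u ∈ Icc 0 T, ∀ x y : X,
      |r - u| < η → dist x y < η → dist (φ r x) (φ u y) < ε := by
  have hK : IsCompact (Icc 0 T ×ˢ (univ : Set X)) := isCompact_Icc.prod isCompact_univ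
  have hUC := hK.uniformContinuousOn_of_continuous hcont.continuousOn
  obtain ⟨η, hη, hmod⟩ := Metric.uniformContinuousOn_iff.mp hUC ε hε
  refine ⟨η, hη, fun r hr u hu x y hru hxy => ?_⟩
  refine hmod (r, x) ⟨hr, mem_univ x⟩ (u, y) ⟨hu, mem_univ y⟩ ?_
  rw [Prod.dist_eq, Real.dist_eq]
  exact max_lt hru hxy

theorem periodic_nearby_in_Gamma_general
    {X : Type*} [MetricSpace X] [CompactSpace X]
    (φ : ℝ → X → X)
    (hcont : Continuous fun p : ℝ × X => φ p.1 p.2)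
    (hadd : ∀ s t x, φ t (φ s x) = φ (t + s) x) :
    ∀ δ > 0, ∀ t > 0,
      ∃ α₀, 0 < α₀ ∧ α₀ < min δ (2 * t) ∧
      ∃ β₀, 0 < β₀ ∧ β₀ < min δ (2 * t) ∧
      ∀ (α β : ℝ), 0 < α → α < α₀ → 0 < β → β < β₀ →
        ∀ (x y : X) (a b : ℝ),
          φ a x = x → φ b y = y →
          a ∈ Set.Icc (t - α / 2) (t + α / 2) →
          b ∈ Set.Icc (t - α / 2) (t + α / 2) →
          dist x y ≤ β → y ∈ Gamma φ δ x := by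
  intro δ hδ t ht
  obtain ⟨η, hη, hmod⟩ := exists_dist_apply_lt_of_compactSpace hcont (2 * t) hδ
  have hε : min η (min δ (2 * t)) / 2 < η ∧ min η (min δ (2 * t)) / 2 < min δ (2 * t) := by
    have : 0 < min δ (2 * t) := lt_min hδ (by linarith)
    constructor <;> linarith [min_le_left η (min δ (2 * t)), min_le_right η (min δ (2 * t))]
  set ε := min η (min δ (2 * t)) / 2
  refine ⟨ε, by positivity, hε.2, ε, by positivity, hε.2, ?_⟩
  intro α β _ hα _ hβ x y a b hx hy ⟨ha₁, ha₂⟩ ⟨hb₁, hb₂⟩ hxy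
  have hα2t : α < 2 * t := hα.trans (hε.2.trans_le (min_le_right _ _))
  have ha : 0 < a := by linarith
  have hb : 0 < b := by linarith
  refine ⟨fun s => b / a * s, by fun_prop, mul_zero _, ?_⟩
  refine (periodic_flow_apply hadd hx).dist_le_of_forall_mem_Ico (periodic_flow_apply hadd hy) ha ?_
  rintro r ⟨hr₀, hra⟩
  have hrb : b / a * r ≤ b := by
    rw [div_mul_eq_mul_div, div_le_iff₀ ha]; nlinarith
  refine (hmod r ⟨hr₀, by linarith⟩ (b / a * r) ⟨by positivity, by linarith⟩ x y ?_ ?_).le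
  · calc |r - b / a * r| ≤ |a - b| := abs_sub_div_mul_le ha ⟨hr₀, hra.le⟩
      _ ≤ α := abs_sub_le_iff.mpr ⟨by linarith, by linarith⟩
      _ < η := hα.trans hε.1
  · linarith

/-- Nearby points on periodic orbits with nearly equal periods close to `t` lie in each
other's `δ`-dynamical ball. -/
theorem periodic_nearby_in_Gamma
    {X : Type*} [MetricSpace X] [CompactSpace X]
    (φ : ℝ → X → X)
    (hcont : Continuous fun p : ℝ × X => φ p.1 p.2)
    (hzero : ∀ x, φ 0 x = x)
    (hadd : ∀ s t x, φ t (φ s x) = φ (t + s) x) :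
    ∀ δ > 0, ∀ t > 0,
      ∃ α₀, 0 < α₀ ∧ α₀ < min δ (2 * t) ∧
      ∃ β₀, 0 < β₀ ∧ β₀ < min δ (2 * t) ∧
      ∀ (α β : ℝ), 0 < α → α < α₀ → 0 < β → β < β₀ →
        ∀ (x y : X) (a b : ℝ),
          φ a x = x → φ b y = y →
          a ∈ Set.Icc (t - α / 2) (t + α / 2) →
          b ∈ Set.Icc (t - α / 2) (t + α / 2) →
          dist x y ≤ β → y ∈ Gamma φ δ x :=
  periodic_nearby_in_Gamma_general φ hcont hadd
end

section
/- Let φ be a continuous flow on a compact metric space X, T > 0, x a periodic (non-singular) point with minimal period t_x ≤ T, and 0 < α < t_x. Then there is β₀ > 0 such that for all 0 < β < β₀, every y in the closed ball B[x, β] which is periodic with minimal period t_y ∈ [0, T] satisfies t_y ∈ [k·t_x − α/2, k·t_x + α/2] for some integer 1 ≤ k ≤ ⌊T/t_x⌋. -/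
/-- `p` is the minimal period of `y` for the flow `φ`: either `p > 0` is the least
positive number with `φ_p(y) = y`, or `p = 0` and `y` is a singularity. -/
def IsMinPeriod {X : Type*} (φ : ℝ → X → X) (y : X) (p : ℝ) : Prop :=
  (0 < p ∧ φ p y = y ∧ ∀ s : ℝ, 0 < s → φ s y = y → p ≤ s) ∨
    (p = 0 ∧ ∀ t : ℝ, φ t y = y)

/-!
Near `x` the periods of `y` are confined to small windows around the multiples of `t_x`:
the set of times in `[0, T]` at distance at least `γ` from `t_x ℤ` is compact and contains no
period of `x`, so by the tube lemma it contains no period of any `y` close enough to `x`. Periods of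
`y` form a subgroup of `ℝ`; if its least positive element were at most `t_x / 2`, some multiple
of it would land in the forbidden window `[t_x / 4, 3 t_x / 4]`. Hence `t_y` is large and sits
within `γ` of a positive multiple `k t_x`, and the choice of `γ` forces `k ≤ ⌊T / t_x⌋`.
-/

open Set Filter Topology

namespace Flow

variable {τ X : Type*} [AddGroup τ] [TopologicalSpace τ] [TopologicalSpace X] (ϕ : Flow τ X)

def periods (y : X) : AddSubgroup τ where
  carrier := {t | ϕ t y = y}
  zero_mem' := ϕ.map_zero_apply y
  add_mem' {s t} (hs : ϕ s y = y) (ht : ϕ t y = y) :=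
    show ϕ (s + t) y = y by rw [map_add, ht, hs]
  neg_mem' {t} ht :=
    calc ϕ (-t) y = ϕ (-t) (ϕ t y) := by rw [ht]
      _ = y := by rw [← map_add, neg_add_cancel, map_zero_apply]

theorem eventually_forall_apply_ne [T2Space X] {K : Set τ} (hK : IsCompact K) {x : X}
    (hx : ∀ t ∈ K, ϕ t x ≠ x) : ∀ᶠ y in 𝓝 x, ∀ t ∈ K, ϕ t y ≠ y :=
  hK.eventually_forall_of_forall_eventually fun t ht =>
    (isOpen_ne_fun (ϕ.continuous continuous_snd continuous_fst) continuous_fst).mem_nhds (hx t ht)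

theorem periods_eq_zmultiples {τ X : Type*} [AddCommGroup τ] [LinearOrder τ]
    [IsOrderedAddMonoid τ] [Archimedean τ] [TopologicalSpace τ] [TopologicalSpace X]
    (ϕ : Flow τ X) {y : X} {p : τ} (hp : IsLeast {t | t ∈ ϕ.periods y ∧ 0 < t} p) :
    ϕ.periods y = AddSubgroup.zmultiples p := by
  rw [AddSubgroup.cyclic_of_min hp, AddSubgroup.zmultiples_eq_closure]

end Flow

def farFromMultiples (p γ T : ℝ) : Set ℝ :=
  {t ∈ Icc 0 T | ∀ k : ℤ, γ ≤ |t - k * p|}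

theorem isCompact_farFromMultiples (p γ T : ℝ) : IsCompact (farFromMultiples p γ T) := by
  have hclosed : IsClosed {t : ℝ | ∀ k : ℤ, γ ≤ |t - k * p|} := by
    rw [ofPred_forall]
    exact isClosed_iInter fun k => isClosed_le continuous_const (by fun_prop)
  exact isCompact_Icc.inter_right hclosed

theorem disjoint_zmultiples_farFromMultiples {p γ : ℝ} (hγ : 0 < γ) (T : ℝ) :
    Disjoint (AddSubgroup.zmultiples p : Set ℝ) (farFromMultiples p γ T) := by
  refine disjoint_left.2 ?_
  rintro _ ⟨k, rfl⟩ ⟨-, hfar⟩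
  have := hfar k
  simp only [zsmul_eq_mul, sub_self, abs_zero] at this
  linarith

theorem Flow.eventually_disjoint_periods_farFromMultiples {X : Type*} [TopologicalSpace X]
    [T2Space X] (ϕ : Flow ℝ X) {x : X} {p : ℝ} (hp : IsLeast {t | t ∈ ϕ.periods x ∧ 0 < t} p)
    {γ : ℝ} (hγ : 0 < γ) (T : ℝ) :
    ∀ᶠ y in 𝓝 x, Disjoint (ϕ.periods y : Set ℝ) (farFromMultiples p γ T) := by
  have hx : ∀ t ∈ farFromMultiples p γ T, ϕ t x ≠ x := fun t ht hper =>
    (disjoint_zmultiples_farFromMultiples hγ T).notMem_of_mem_left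
      (SetLike.mem_coe.2 (ϕ.periods_eq_zmultiples hp ▸ hper)) ht
  filter_upwards [ϕ.eventually_forall_apply_ne (isCompact_farFromMultiples p γ T) hx] with y hy
  exact disjoint_left.2 fun t hper ht => hy t ht hper

section PeriodSubgroup

variable {G : AddSubgroup ℝ} {p γ T : ℝ}

theorem exists_abs_sub_lt_of_disjoint (hG : Disjoint (G : Set ℝ) (farFromMultiples p γ T))
    {t : ℝ} (ht : t ∈ G) (ht0 : 0 ≤ t) (htT : t ≤ T) : ∃ k : ℤ, |t - k * p| < γ := by
  by_contra! h
  exact hG.notMem_of_mem_left ht ⟨⟨ht0, htT⟩, h⟩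

theorem half_lt_of_disjoint (hG : Disjoint (G : Set ℝ) (farFromMultiples p γ T)) (hp : 0 < p)
    (hγp : 4 * γ ≤ p) (hpT : p ≤ T) {q : ℝ} (hq : q ∈ G) (hq0 : 0 < q) : p / 2 < q := by
  by_contra! hqp
  -- the multiple `n q` lands in `[p / 4, 3 p / 4]`, which is at distance `≥ p / 4 ≥ γ` from `p ℤ`
  set n := ⌈p / 4 / q⌉
  have hlow : p / 4 ≤ n * q := (div_le_iff₀ hq0).1 (Int.le_ceil _)
  have hhigh : n * q < p / 4 + q := by
    have := mul_lt_mul_of_pos_right (Int.ceil_lt_add_one (p / 4 / q)) hq0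
    rwa [add_mul, div_mul_cancel₀ _ hq0.ne', one_mul] at this
  obtain ⟨k, hk⟩ := exists_abs_sub_lt_of_disjoint hG (zsmul_eq_mul q n ▸ G.zsmul_mem hq n)
    (by linarith) (by linarith)
  obtain ⟨hk₁, hk₂⟩ := abs_lt.1 hk
  rcases le_or_gt k 0 with hk0 | hk0
  · have : (k : ℝ) * p ≤ 0 := mul_nonpos_of_nonpos_of_nonneg (by exact_mod_cast hk0) hp.le
    linarith
  · have : p ≤ (k : ℝ) * p := le_mul_of_one_le_left hp.le (by exact_mod_cast hk0)
    linarith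

end PeriodSubgroup

theorem one_le_and_le_floor_of_abs_sub_lt {p γ T t : ℝ} {k : ℤ} (hp : 0 < p)
    (hk : |t - k * p| < γ) (hγt : γ ≤ t) (htT : t ≤ T) (hgap : T + γ ≤ (⌊T / p⌋ + 1) * p) :
    1 ≤ k ∧ k ≤ ⌊T / p⌋ := by
  obtain ⟨hk₁, hk₂⟩ := abs_lt.1 hk
  constructor
  · have : (0 : ℝ) < k := pos_of_mul_pos_left (by linarith) hp.le
    exact_mod_cast this
  · have : (k : ℝ) < ⌊T / p⌋ + 1 := lt_of_mul_lt_mul_right (by linarith) hp.le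
    exact Int.lt_add_one_iff.1 (by exact_mod_cast this)

theorem period_localization_general
    {X : Type*} [MetricSpace X]
    (φ : ℝ → X → X)
    (hcont : Continuous fun p : ℝ × X => φ p.1 p.2)
    (hzero : ∀ x, φ 0 x = x)
    (hadd : ∀ s t x, φ t (φ s x) = φ (t + s) x)
    (T : ℝ)
    (x : X) (tx : ℝ)
    (hx : 0 < tx ∧ φ tx x = x ∧ ∀ s : ℝ, 0 < s → φ s x = x → tx ≤ s)
    (htxT : tx ≤ T)
    (α : ℝ) (hα : 0 < α) :
    ∃ β₀ > 0, ∀ β, 0 < β → β < β₀ →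
      ∀ (y : X) (ty : ℝ), dist x y ≤ β → IsMinPeriod φ y ty →
        0 ≤ ty → ty ≤ T →
        ∃ k : ℤ, 1 ≤ k ∧ k ≤ ⌊T / tx⌋ ∧
          ty ∈ Set.Icc ((k : ℝ) * tx - α / 2) ((k : ℝ) * tx + α / 2) := by
  let ϕ : Flow ℝ X := ⟨φ, hcont, fun s t y => (hadd t s y).symm, hzero⟩
  have hleast : IsLeast {t | t ∈ ϕ.periods x ∧ 0 < t} tx :=
    ⟨⟨hx.2.1, hx.1⟩, fun s hs => hx.2.2 s hs.2 hs.1⟩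
  have hgap : 0 < (⌊T / tx⌋ + 1) * tx - T :=
    sub_pos.2 ((div_lt_iff₀ hx.1).1 (Int.lt_floor_add_one _))
  obtain ⟨γ, hγ, hγα, hγtx, hγT⟩ :
      ∃ γ > 0, γ ≤ α / 2 ∧ γ ≤ tx / 4 ∧ γ ≤ (⌊T / tx⌋ + 1) * tx - T :=
    ⟨_, lt_min (half_pos hα) (lt_min (by linarith [hx.1]) hgap), min_le_left _ _,
      min_le_of_right_le (min_le_left _ _), min_le_of_right_le (min_le_right _ _)⟩
  obtain ⟨β₀, hβ₀, hnear⟩ :=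
    Metric.eventually_nhds_iff.1 (ϕ.eventually_disjoint_periods_farFromMultiples hleast hγ T)
  refine ⟨β₀, hβ₀, fun β _ hβ y ty hxy hty _ htyT => ?_⟩
  have hG := hnear (y := y) (by rw [dist_comm]; linarith)
  rcases hty with ⟨hty0, hper, -⟩ | ⟨-, hall⟩
  · have hhalf := half_lt_of_disjoint hG hx.1 (by linarith) htxT hper hty0
    obtain ⟨k, hk⟩ := exists_abs_sub_lt_of_disjoint hG hper hty0.le htyT
    obtain ⟨hk1, hkT⟩ := one_le_and_le_floor_of_abs_sub_lt hx.1 hk (by linarith) htyT (by linarith)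
    obtain ⟨hk₁, hk₂⟩ := abs_lt.1 hk
    exact ⟨k, hk1, hkT, by linarith, by linarith⟩
  · have hhalf := half_lt_of_disjoint hG hx.1 (by linarith) htxT (hall (tx / 2)) (half_pos hx.1)
    exact absurd hhalf (lt_irrefl _)

/-- Localization of periods: periodic points of period at most `T` near a periodic
point `x` have period close to an integer multiple `k·t_x`, `1 ≤ k ≤ ⌊T/t_x⌋`. -/
theorem period_localization
    {X : Type*} [MetricSpace X] [CompactSpace X]
    (φ : ℝ → X → X)
    (hcont : Continuous fun p : ℝ × X => φ p.1 p.2)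
    (hzero : ∀ x, φ 0 x = x)
    (hadd : ∀ s t x, φ t (φ s x) = φ (t + s) x)
    (T : ℝ) (hT : 0 < T)
    (x : X) (tx : ℝ)
    (hx : 0 < tx ∧ φ tx x = x ∧ ∀ s : ℝ, 0 < s → φ s x = x → tx ≤ s)
    (htxT : tx ≤ T)
    (α : ℝ) (hα : 0 < α) (hαtx : α < tx) :
    ∃ β₀ > 0, ∀ β, 0 < β → β < β₀ →
      ∀ (y : X) (ty : ℝ), dist x y ≤ β → IsMinPeriod φ y ty →
        0 ≤ ty → ty ≤ T →
        ∃ k : ℤ, 1 ≤ k ∧ k ≤ ⌊T / tx⌋ ∧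
          ty ∈ Set.Icc ((k : ℝ) * tx - α / 2) ((k : ℝ) * tx + α / 2) :=
  period_localization_general φ hcont hzero hadd T x tx hx htxT α hα
end

section
/- If μ is an expansive measure of a continuous flow φ on a compact metric space X, then μ(Per_T(φ)) = 0 for every T ≥ 0, where Per_T(φ) denotes the set of points which are singularities or periodic with minimal period at most T. -/
open MeasureTheory

/-!
Near a point `x` of `Per_T(φ)`, every point of `Per_T(φ)` lies in `Γ_δ(x)`, so by Lindelöf
`Per_T(φ)` is covered by countably many null sets `Γ_δ(x)`. If `x` is a singularity, `Γ_δ(x)`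
contains the `δ`-ball around `x`.
If `x` has minimal period `p > 0` and `y` is close to `x` with minimal period `q ≤ T`, then
`φ_q(x)` is close to `x`, and since the return times of `x` in `[0, T]` are the multiples of
`p`, compactness forces `q` to be close to some `n p`. For `n ≥ 1` the linear time change
`t ↦ (q / (n p)) t` makes the orbit of `y` shadow that of `x`; for `n ≤ 0` the period `q` is
tiny, so the whole orbit of `y` stays near `y`, and the constant time change works.
-/

open Set Filter Topology Metric

section Flow

variable {X : Type*} {φ : ℝ → X → X}

def perT (φ : ℝ → X → X) (T : ℝ) : Set X :=
  {x | ∃ p : ℝ, 0 ≤ p ∧ p ≤ T ∧ IsMinPeriod φ x p}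

theorem periodic_flow (hadd : ∀ s t x, φ t (φ s x) = φ (t + s) x) {x : X} {p : ℝ}
    (hx : φ p x = x) : Function.Periodic (fun t => φ t x) p := fun t => by
  simp only [← hadd p t x, hx]

theorem eq_int_mul_of_flow_eq (hadd : ∀ s t x, φ t (φ s x) = φ (t + s) x) {x : X} {p s : ℝ}
    (hp : 0 < p) (hx : φ p x = x) (hmin : ∀ s : ℝ, 0 < s → φ s x = x → p ≤ s)
    (hs : φ s x = x) : ∃ n : ℤ, s = n * p := by
  have hr : φ (toIcoMod hp 0 s) x = x := by
    rw [← self_sub_toIcoDiv_zsmul]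
    exact ((periodic_flow hadd hx).sub_zsmul_eq _).trans hs
  obtain ⟨hr0, hrp⟩ := toIcoMod_mem_Ico' hp s
  have hr_eq : toIcoMod hp 0 s = 0 := by
    by_contra hne
    exact (hmin _ (lt_of_le_of_ne hr0 (Ne.symm hne)) hr).not_gt hrp
  refine ⟨toIcoDiv hp 0 s, ?_⟩
  have := toIcoMod_add_toIcoDiv_zsmul hp 0 s
  rwa [hr_eq, zero_add, zsmul_eq_mul, eq_comm] at this

theorem IsMinPeriod.flow_eq {y : X} {q : ℝ} (hy : IsMinPeriod φ y q) : φ q y = y := by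
  rcases hy with ⟨-, hq, -⟩ | ⟨rfl, hsing⟩
  exacts [hq, hsing 0]

theorem IsMinPeriod.exists_flow_eq (hadd : ∀ s t x, φ t (φ s x) = φ (t + s) x) {y : X} {q : ℝ}
    (hy : IsMinPeriod φ y q) (t : ℝ) : ∃ s ∈ Icc 0 q, φ t y = φ s y := by
  rcases hy with ⟨hq, hqy, -⟩ | ⟨rfl, hsing⟩
  · obtain ⟨s, hs, e⟩ := (periodic_flow hadd hqy).exists_mem_Ico₀ hq t
    exact ⟨s, Ico_subset_Icc_self hs, e⟩
  · exact ⟨0, left_mem_Icc.2 le_rfl, by rw [hsing, hsing]⟩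

variable [MetricSpace X]

theorem Gamma_mono {δ δ' : ℝ} (h : δ ≤ δ') (x : X) : Gamma φ δ x ⊆ Gamma φ δ' x :=
  fun _ ⟨k, hk, hk0, hd⟩ => ⟨k, hk, hk0, fun t => (hd t).trans h⟩

def FlowModulus (φ : ℝ → X → X) (R r ε : ℝ) : Prop :=
  ∀ s ∈ Icc 0 R, ∀ s' ∈ Icc 0 R, |s - s'| < ε → ∀ y z : X, dist y z < ε → dist (φ s y) (φ s' z) < r

theorem exists_flowModulus [CompactSpace X] (hcont : Continuous fun p : ℝ × X => φ p.1 p.2)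
    (R : ℝ) {r : ℝ} (hr : 0 < r) : ∃ ε > 0, FlowModulus φ R r ε := by
  obtain ⟨ε, hε, h⟩ := Metric.uniformContinuousOn_iff.1
    ((isCompact_Icc.prod isCompact_univ).uniformContinuousOn_of_continuous hcont.continuousOn) r hr
  refine ⟨ε, hε, fun s hs s' hs' hss y z hyz => h (s, y) ⟨hs, trivial⟩ (s', z) ⟨hs', trivial⟩ ?_⟩
  rw [Prod.dist_eq, Real.dist_eq]
  exact max_lt hss hyz

theorem exists_abs_sub_int_mul_lt_of_dist_flow_lt (hcont : Continuous fun p : ℝ × X => φ p.1 p.2)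
    (hadd : ∀ s t x, φ t (φ s x) = φ (t + s) x) {x : X} {p : ℝ} (hp : 0 < p) (hx : φ p x = x)
    (hmin : ∀ s : ℝ, 0 < s → φ s x = x → p ≤ s) (T : ℝ) {η : ℝ} (hη : 0 < η) :
    ∃ γ > 0, ∀ q ∈ Icc 0 T, dist (φ q x) x < γ → ∃ n : ℤ, |q - n * p| < η := by
  set K := Icc 0 T ∩ ⋂ n : ℤ, {s : ℝ | η ≤ |s - n * p|}
  have hK : IsCompact K := isCompact_Icc.inter_right <|
    isClosed_iInter fun n => isClosed_le continuous_const (by fun_prop)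
  have hf : Continuous fun s => dist (φ s x) x :=
    (hcont.comp (Continuous.prodMk_left x)).dist continuous_const
  have hpos : ∀ s ∈ K, 0 < dist (φ s x) x := by
    refine fun s hs => dist_pos.2 fun hsx => ?_
    obtain ⟨n, rfl⟩ := eq_int_mul_of_flow_eq hadd hp hx hmin hsx
    have := mem_iInter.1 hs.2 n
    simp only [mem_ofPred_eq, sub_self, abs_zero] at this
    linarith
  obtain ⟨γ, hγ, hγK⟩ := hK.exists_forall_le' hf.continuousOn hpos
  refine ⟨γ, hγ, fun q hq hqx => ?_⟩
  by_contra! hfar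
  exact (hγK q ⟨hq, mem_iInter.2 hfar⟩).not_gt hqx

theorem exists_abs_sub_int_mul_lt_of_flow_eq [CompactSpace X]
    (hcont : Continuous fun p : ℝ × X => φ p.1 p.2) (hadd : ∀ s t x, φ t (φ s x) = φ (t + s) x)
    {x : X} {p : ℝ} (hp : 0 < p) (hx : φ p x = x) (hmin : ∀ s : ℝ, 0 < s → φ s x = x → p ≤ s)
    (T : ℝ) {η : ℝ} (hη : 0 < η) :
    ∃ ε > 0, ∀ y, dist x y < ε → ∀ q ∈ Icc 0 T, φ q y = y → ∃ n : ℤ, |q - n * p| < η := by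
  obtain ⟨γ, hγ, hgap⟩ := exists_abs_sub_int_mul_lt_of_dist_flow_lt hcont hadd hp hx hmin T hη
  obtain ⟨ε, hε, hmod⟩ := exists_flowModulus hcont T (half_pos hγ)
  refine ⟨min ε (γ / 2), by positivity, fun y hxy q hq hy => hgap q hq ?_⟩
  obtain ⟨hxyε, hxyγ⟩ := lt_min_iff.1 hxy
  calc dist (φ q x) x ≤ dist (φ q x) (φ q y) + dist (φ q y) x := dist_triangle _ _ _
    _ = dist (φ q x) (φ q y) + dist x y := by rw [hy, dist_comm y x]
    _ < γ / 2 + γ / 2 := add_lt_add (hmod q hq q hq (by simpa using hε) x y hxyε) hxyγ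
    _ = γ := add_halves γ

theorem mem_Gamma_of_periodic (hadd : ∀ s t x, φ t (φ s x) = φ (t + s) x) {x y : X}
    {P Q δ : ℝ} (hP : 0 < P) (hx : φ P x = x) (hy : φ Q y = y)
    (hclose : ∀ s ∈ Ico 0 P, dist (φ s x) (φ (Q / P * s) y) ≤ δ) : y ∈ Gamma φ δ x := by
  refine ⟨fun t => Q / P * t, by fun_prop, mul_zero _, fun t => ?_⟩
  obtain ⟨s, n, hs, rfl⟩ : ∃ s n, s ∈ Ico 0 P ∧ t = s + n • P :=
    ⟨_, _, toIcoMod_mem_Ico' hP t, (toIcoMod_add_toIcoDiv_zsmul hP 0 t).symm⟩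
  have hQ : Q / P * (s + n • P) = Q / P * s + n • Q := by
    rw [zsmul_eq_mul, zsmul_eq_mul]
    field_simp
  have hxn : φ (s + n • P) x = φ s x := (periodic_flow hadd hx).zsmul n s
  have hyn : φ (Q / P * s + n • Q) y = φ (Q / P * s) y := (periodic_flow hadd hy).zsmul n _
  simp only [hQ, hxn, hyn]
  exact hclose s hs

theorem mem_Gamma_of_minPeriod_lt (hzero : ∀ x, φ 0 x = x)
    (hadd : ∀ s t x, φ t (φ s x) = φ (t + s) x) {x y : X} {p q R ε δ : ℝ} (hp : 0 < p)
    (hx : φ p x = x) (hy : IsMinPeriod φ y q) (hpR : p ≤ R) (hqR : q ≤ R) (hqε : q < ε)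
    (hmod : FlowModulus φ R (δ / 2) ε) (hxy : dist x y < ε) : y ∈ Gamma φ δ x := by
  have hε : 0 < ε := dist_nonneg.trans_lt hxy
  refine mem_Gamma_of_periodic hadd hp hx (hzero y) fun s hs => ?_
  obtain ⟨s', hs', e⟩ := hy.exists_flow_eq hadd s
  have hsR : s ∈ Icc 0 R := ⟨hs.1, hs.2.le.trans hpR⟩
  have hs'R : s' ∈ Icc 0 R := ⟨hs'.1, hs'.2.trans hqR⟩
  have hs'0 : |s' - 0| < ε := by rw [sub_zero, abs_of_nonneg hs'.1]; exact hs'.2.trans_lt hqε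
  -- the whole orbit of `y` stays within `δ / 2` of `y`
  calc dist (φ s x) (φ (0 / p * s) y) ≤ dist (φ s x) (φ s y) + dist (φ s' y) (φ 0 y) := by
        rw [zero_div, zero_mul, ← e]; exact dist_triangle _ _ _
    _ ≤ δ / 2 + δ / 2 := add_le_add (hmod s hsR s hsR (by simpa using hε) x y hxy).le
        (hmod s' hs'R 0 ⟨le_rfl, hp.le.trans hpR⟩ hs'0 y y (by simpa using hε)).le
    _ = δ := add_halves δ

theorem mem_Gamma_of_abs_sub_period_lt (hadd : ∀ s t x, φ t (φ s x) = φ (t + s) x)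
    {x y : X} {P q R ε δ : ℝ} (hP : 0 < P) (hx : φ P x = x) (hq : 0 ≤ q) (hy : φ q y = y)
    (hPR : P ≤ R) (hqR : q ≤ R) (hPq : |P - q| < ε) (hmod : FlowModulus φ R δ ε)
    (hxy : dist x y < ε) : y ∈ Gamma φ δ x := by
  refine mem_Gamma_of_periodic hadd hP hx hy fun s hs => (hmod s ?_ _ ?_ ?_ x y hxy).le
  · exact ⟨hs.1, hs.2.le.trans hPR⟩
  · have hqs : q / P * s ≤ q := by
      calc q / P * s ≤ q / P * P := mul_le_mul_of_nonneg_left hs.2.le (div_nonneg hq hP.le)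
        _ = q := div_mul_cancel₀ q hP.ne'
    exact ⟨mul_nonneg (div_nonneg hq hP.le) hs.1, hqs.trans hqR⟩
  · have heq : s - q / P * s = s / P * (P - q) := by field_simp
    rw [heq, abs_mul, abs_of_nonneg (div_nonneg hs.1 hP.le)]
    calc s / P * |P - q| ≤ 1 * |P - q| := by gcongr; exact (div_le_one hP).2 hs.2.le
      _ < ε := by rwa [one_mul]

theorem Gamma_mem_nhdsWithin_perT_of_periodic [CompactSpace X]
    (hcont : Continuous fun p : ℝ × X => φ p.1 p.2) (hzero : ∀ x, φ 0 x = x)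
    (hadd : ∀ s t x, φ t (φ s x) = φ (t + s) x) {δ : ℝ} (hδ : 0 < δ) (T : ℝ) {x : X} {p : ℝ}
    (hp : 0 < p) (hx : φ p x = x) (hmin : ∀ s : ℝ, 0 < s → φ s x = x → p ≤ s) :
    Gamma φ δ x ∈ 𝓝[perT φ T] x := by
  obtain ⟨ε₀, hε₀, hmod⟩ := exists_flowModulus hcont (T + p + 1) (half_pos hδ)
  -- the cap `1` keeps `n p < q + 1` inside the time window `[0, T + p + 1]`
  obtain ⟨ε₁, hε₁, hgap⟩ :=
    exists_abs_sub_int_mul_lt_of_flow_eq hcont hadd hp hx hmin T (lt_min hε₀ one_pos)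
  refine Metric.mem_nhdsWithin_iff.2 ⟨min ε₀ ε₁, lt_min hε₀ hε₁, ?_⟩
  rintro y ⟨hxy, q, hq0, hqT, hy⟩
  obtain ⟨hxy₀, hxy₁⟩ := lt_min_iff.1 (mem_ball'.1 hxy)
  obtain ⟨n, hn⟩ := hgap y hxy₁ q ⟨hq0, hqT⟩ hy.flow_eq
  rcases le_or_gt n 0 with hn0 | hn0
  · have hnp : (n : ℝ) * p ≤ 0 := mul_nonpos_of_nonpos_of_nonneg (by exact_mod_cast hn0) hp.le
    have hqε₀ : q < ε₀ := by linarith [le_abs_self (q - n * p), min_le_left ε₀ 1]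
    exact mem_Gamma_of_minPeriod_lt hzero hadd hp hx hy (by linarith) (by linarith) hqε₀ hmod hxy₀
  · have hP : 0 < n * p := mul_pos (by exact_mod_cast hn0) hp
    have hPx : φ (n * p) x = x := ((periodic_flow hadd hx).int_mul_eq n).trans (hzero x)
    have hPq : |n * p - q| < min ε₀ 1 := by rwa [abs_sub_comm]
    have hPq₁ : n * p - q < 1 := (le_abs_self _).trans_lt (hPq.trans_le (min_le_right _ _))
    refine Gamma_mono (half_le_self hδ.le) x <|
      mem_Gamma_of_abs_sub_period_lt hadd hP hPx hq0 hy.flow_eq (by linarith) (by linarith)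
        (hPq.trans_le (min_le_left _ _)) hmod hxy₀

theorem Gamma_mem_nhdsWithin_perT [CompactSpace X]
    (hcont : Continuous fun p : ℝ × X => φ p.1 p.2) (hzero : ∀ x, φ 0 x = x)
    (hadd : ∀ s t x, φ t (φ s x) = φ (t + s) x) {δ : ℝ} (hδ : 0 < δ) (T : ℝ) {x : X} {p : ℝ}
    (hx : IsMinPeriod φ x p) : Gamma φ δ x ∈ 𝓝[perT φ T] x := by
  rcases hx with ⟨hp, hpx, hmin⟩ | ⟨-, hsing⟩
  · exact Gamma_mem_nhdsWithin_perT_of_periodic hcont hzero hadd hδ T hp hpx hmin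
  · refine mem_nhdsWithin_of_mem_nhds (mem_of_superset (ball_mem_nhds x hδ) fun y hy => ?_)
    exact ⟨fun _ => 0, continuous_const, rfl, fun t => by
      rw [hsing, hzero]; exact (mem_ball'.1 hy).le⟩

end Flow

theorem expansive_measure_PerT_null_general
    {X : Type*} [MetricSpace X] [CompactSpace X] [MeasurableSpace X]
    (φ : ℝ → X → X)
    (hcont : Continuous fun p : ℝ × X => φ p.1 p.2)
    (hzero : ∀ x, φ 0 x = x)
    (hadd : ∀ s t x, φ t (φ s x) = φ (t + s) x)
    (μ : Measure X)
    (hexp : ∃ δ > 0, ∀ x : X, μ (Gamma φ δ x) = 0) :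
    ∀ T : ℝ, 0 ≤ T →
      μ {x : X | ∃ p : ℝ, 0 ≤ p ∧ p ≤ T ∧ IsMinPeriod φ x p} = 0 := by
  obtain ⟨δ, hδ, hnull⟩ := hexp
  intro T _
  exact measure_null_of_locally_null (perT φ T) fun x ⟨_, _, _, hx⟩ =>
    ⟨Gamma φ δ x, Gamma_mem_nhdsWithin_perT hcont hzero hadd hδ T hx, hnull x⟩

/-- An expansive measure of a continuous flow on a compact metric space gives zero
measure to the set `Per_T(φ)` of points of minimal period at most `T`, for all `T ≥ 0`. -/
theorem expansive_measure_PerT_null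
    {X : Type*} [MetricSpace X] [CompactSpace X] [MeasurableSpace X] [BorelSpace X]
    (φ : ℝ → X → X)
    (hcont : Continuous fun p : ℝ × X => φ p.1 p.2)
    (hzero : ∀ x, φ 0 x = x)
    (hadd : ∀ s t x, φ t (φ s x) = φ (t + s) x)
    (μ : Measure X)
    (hexp : ∃ δ > 0, ∀ x : X, μ (Gamma φ δ x) = 0) :
    ∀ T : ℝ, 0 ≤ T →
      μ {x : X | ∃ p : ℝ, 0 ≤ p ∧ p ≤ T ∧ IsMinPeriod φ x p} = 0 :=
  expansive_measure_PerT_null_general φ hcont hzero hadd μ hexp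
end

section
/- If μ is an expansive measure of a continuous flow φ on a compact metric space, then φ is aperiodic with respect to μ, i.e., μ(Per(φ)) = 0 where Per(φ) is the set of all periodic points of φ. -/
open MeasureTheory

/-- Uniform continuity of a continuous flow on a compact time window. -/
lemma flow_unif_cont {X : Type*} [MetricSpace X] [CompactSpace X] (φ : ℝ → X → X)
    (hcont : Continuous fun p : ℝ × X => φ p.1 p.2) (T δ' : ℝ) (hδ' : 0 < δ') :
    ∃ ε > 0, ∀ (a b : ℝ) (y z : X), a ∈ Set.Icc (-T) T → b ∈ Set.Icc (-T) T →
      |a - b| ≤ ε → dist y z ≤ ε → dist (φ a y) (φ b z) ≤ δ' := by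
  have hK : IsCompact ((Set.Icc (-T) T) ×ˢ (Set.univ : Set X)) :=
    isCompact_Icc.prod isCompact_univ
  have hu : UniformContinuousOn (fun p : ℝ × X => φ p.1 p.2) _ :=
    hK.uniformContinuousOn_of_continuous hcont.continuousOn
  rw [Metric.uniformContinuousOn_iff] at hu
  obtain ⟨d, hd, h⟩ := hu δ' hδ'
  refine ⟨d / 2, by linarith, fun a b y z ha hb hab hyz => ?_⟩
  have := h (a, y) (by simp [ha]) (b, z) (by simp [hb]) ?_
  · exact this.le
  · rw [Prod.dist_eq]
    simp only [Real.dist_eq]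
    exact max_lt (lt_of_le_of_lt hab (by linarith)) (lt_of_le_of_lt hyz (by linarith))

/-- A continuous flow on a compact metric space is aperiodic with respect to any of
its expansive measures: the set of periodic points has measure zero. -/
theorem expansive_measure_aperiodic
    {X : Type*} [MetricSpace X] [CompactSpace X] [MeasurableSpace X] [BorelSpace X]
    (φ : ℝ → X → X)
    (hcont : Continuous fun p : ℝ × X => φ p.1 p.2)
    (hzero : ∀ x, φ 0 x = x)
    (hadd : ∀ s t x, φ t (φ s x) = φ (t + s) x)
    (μ : Measure X)
    (hexp : ∃ δ > 0, ∀ x : X, μ (Gamma φ δ x) = 0) :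
    μ {x : X | ∃ p : ℝ, 0 < p ∧ φ p x = x ∧
        ∀ s : ℝ, 0 < s → φ s x = x → p ≤ s} = 0 := by
  obtain ⟨δ, hδ, hG⟩ := hexp
  rcases isEmpty_or_nonempty X with hE | hNE
  · have : {x : X | ∃ p : ℝ, 0 < p ∧ φ p x = x ∧
        ∀ s : ℝ, 0 < s → φ s x = x → p ≤ s} = ∅ := Set.eq_empty_of_isEmpty _
    simp [this]
  -- choose η so that moving time by at most η moves points by at most δ/2
  obtain ⟨η₀, hη₀, hηp⟩ := flow_unif_cont φ hcont 1 (δ / 2) (by linarith)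
  set η := min η₀ 1 with hηdef
  have hηpos : 0 < η := lt_min hη₀ one_pos
  have hη1 : η ≤ 1 := min_le_right _ _
  have hηsmall : ∀ (c : ℝ) (z : X), |c| ≤ η → dist z (φ c z) ≤ δ / 2 := by
    intro c z hc
    have hc1 : |c| ≤ 1 := hc.trans hη1
    have h0c : |(0:ℝ) - c| ≤ η₀ := by
      rw [zero_sub, abs_neg]; exact hc.trans (min_le_left _ _)
    have := hηp 0 c z z (by norm_num)
      ⟨by linarith [neg_abs_le c], by linarith [le_abs_self c]⟩ h0c (by simp [hη₀.le])
    rwa [hzero] at this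
  -- choose ε k : uniform continuity on time window [0, (k+1)η]
  have hεex : ∀ k : ℕ, ∃ ε > 0, ∀ (s : ℝ) (y z : X), s ∈ Set.Icc 0 ((k + 1) * η) →
      dist y z ≤ ε → dist (φ s y) (φ s z) ≤ δ / 2 := by
    intro k
    obtain ⟨ε, hε, h⟩ := flow_unif_cont φ hcont ((k + 1) * η) (δ / 2) (by linarith)
    have hT : (0:ℝ) ≤ (k + 1) * η := by positivity
    refine ⟨ε, hε, fun s y z hs hyz => ?_⟩
    exact h s s y z ⟨by linarith [hs.1], hs.2⟩ ⟨by linarith [hs.1], hs.2⟩ (by simp [le_of_lt hε]) hyz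
  choose ε hεpos hεprop using hεex
  -- countable dense sequence
  set u : ℕ → X := TopologicalSpace.denseSeq X with hu
  have hud : DenseRange u := TopologicalSpace.denseRange_denseSeq X
  -- the countable pieces
  set S : ℕ → ℕ → Set X := fun k j =>
    {y | ∃ q : ℝ, 0 < q ∧ φ q y = y ∧ (k : ℝ) * η ≤ q ∧ q ≤ (k + 1) * η ∧
      dist y (u j) < ε k / 2} with hS
  have hcover : {x : X | ∃ p : ℝ, 0 < p ∧ φ p x = x ∧
      ∀ s : ℝ, 0 < s → φ s x = x → p ≤ s} ⊆ ⋃ (k : ℕ) (j : ℕ), S k j := by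
    rintro x ⟨p, hp, hpx, -⟩
    set k : ℕ := ⌊p / η⌋.toNat with hk
    have hfl : (0:ℤ) ≤ ⌊p / η⌋ := Int.floor_nonneg.2 (by positivity)
    have hkc : ((k : ℝ)) = ((⌊p / η⌋ : ℤ) : ℝ) := by exact_mod_cast Int.toNat_of_nonneg hfl
    have h1 : (k : ℝ) * η ≤ p := by
      have h := Int.floor_le (p / η)
      rw [← hkc] at h
      calc (k : ℝ) * η ≤ (p / η) * η := by nlinarith
        _ = p := by field_simp
    have h2 : p ≤ (k + 1) * η := by
      have h := (Int.lt_floor_add_one (p / η)).le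
      rw [← hkc] at h
      calc p = (p / η) * η := by field_simp
        _ ≤ ((k : ℝ) + 1) * η := by nlinarith
    obtain ⟨z, ⟨j, rfl⟩, hz⟩ := Metric.mem_closure_iff.1 (hud.closure_eq ▸ Set.mem_univ x :
      x ∈ closure (Set.range u)) (ε k / 2) (by linarith [hεpos k])
    exact Set.mem_iUnion.2 ⟨k, Set.mem_iUnion.2 ⟨j, ⟨p, hp, hpx, h1, h2, hz⟩⟩⟩
  refine measure_mono_null hcover (measure_iUnion_null fun k => measure_iUnion_null fun j => ?_)
  -- each piece has measure zero
  rcases Set.eq_empty_or_nonempty (S k j) with hemp | ⟨x, p, hp, hpx, hp1, hp2, hpd⟩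
  · simp [hemp]
  refine measure_mono_null (fun y hy => ?_) (hG x)
  obtain ⟨q, hq, hqy, hq1, hq2, hqd⟩ := hy
  have hxy : dist x y ≤ ε k := by
    have := dist_triangle x (u j) y
    rw [dist_comm (u j) y] at this
    linarith
  refine ⟨fun t => q / p * t, continuous_const.mul continuous_id, mul_zero _, fun t => ?_⟩
  -- periodicity of the orbits
  have fx : Function.Periodic (fun t => φ t x) p := fun t => by
    have h := hadd p t x
    rw [hpx] at h
    exact h.symm
  have fy : Function.Periodic (fun t => φ t y) q := fun t => by
    have h := hadd q t y
    rw [hqy] at h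
    exact h.symm
  set n : ℤ := ⌊t / p⌋ with hn
  set s : ℝ := t - n * p with hs'
  have hfl1 : (n : ℝ) ≤ t / p := Int.floor_le _
  have hfl2 : t / p < n + 1 := Int.lt_floor_add_one _
  have hs0 : 0 ≤ s := by
    have : (n : ℝ) * p ≤ t := by
      calc (n : ℝ) * p ≤ (t / p) * p := by nlinarith
        _ = t := by field_simp
    linarith
  have hsp : s < p := by
    have : t < ((n : ℝ) + 1) * p := by
      calc t = (t / p) * p := by field_simp
        _ < ((n : ℝ) + 1) * p := by nlinarith
    simp only [hs']; nlinarith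
  have e1 : φ t x = φ s x := (fx.sub_int_mul_eq n).symm
  have e2 : φ (q / p * t) y = φ (q / p * s) y := by
    have : q / p * s = q / p * t - n * q := by
      simp only [hs']; field_simp
    rw [this]
    exact (fy.sub_int_mul_eq n).symm
  rw [e1, e2]
  have hδ1 : dist (φ s x) (φ s y) ≤ δ / 2 :=
    hεprop k s x y ⟨hs0, le_of_lt (lt_of_lt_of_le hsp hp2)⟩ hxy
  set c : ℝ := q / p * s - s with hc'
  have hcy : φ (q / p * s) y = φ c (φ s y) := by
    rw [hadd]; congr 1; simp only [hc']; ring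
  have hqp : |q - p| ≤ η := by
    rw [abs_le]; constructor <;> nlinarith
  have hcb : |c| ≤ η := by
    have hcval : c = (q - p) * (s / p) := by simp only [hc']; field_simp
    have hsp1 : s / p ≤ 1 := (div_le_one hp).2 hsp.le
    have hsp0 : 0 ≤ s / p := by positivity
    rw [hcval, abs_mul, abs_of_nonneg hsp0]
    calc |q - p| * (s / p) ≤ η * 1 := by
          apply mul_le_mul hqp hsp1 hsp0 hηpos.le
      _ = η := mul_one _
  have hδ2 : dist (φ s y) (φ (q / p * s) y) ≤ δ / 2 := by
    rw [hcy]; exact hηsmall c (φ s y) hcb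
  calc dist (φ s x) (φ (q / p * s) y) ≤ dist (φ s x) (φ s y) + dist (φ s y) (φ (q / p * s) y) :=
        dist_triangle _ _ _
    _ ≤ δ / 2 + δ / 2 := add_le_add hδ1 hδ2
    _ = δ := by ring
end

section
/- Let f : X → X and g : Y → Y be homeomorphisms of compact metric spaces, m the Lebesgue measure on an interval I ⊆ ℝ, and Id the identity on I. If the product measure μ × m is expansive for the homeomorphism f × Id : X × I → X × I (with the max metric), then μ is expansive for f. -/
open MeasureTheory

/-- If the product measure `μ × m` (`m` Lebesgue measure on a nondegenerate compact
interval `I`) is expansive for `f × Id` on `X × I` (max metric), then `μ` is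
expansive for `f`. -/
theorem product_expansive_implies_expansive
    {X : Type*} [MetricSpace X] [CompactSpace X] [MeasurableSpace X] [BorelSpace X]
    (f : Equiv.Perm X) (hf : Continuous f) (hf' : Continuous f.symm)
    (μ : Measure X)
    (a b : ℝ) (hab : a < b)
    (hexp : ∃ δ > 0, ∀ z : X × (Set.Icc a b),
        (μ.prod ((volume : Measure ℝ).comap Subtype.val))
          {z' : X × (Set.Icc a b) |
            ∀ n : ℤ, dist ((f ^ n) z.1) ((f ^ n) z'.1) ≤ δ ∧ dist z.2 z'.2 ≤ δ} = 0) :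
    ∃ δ > 0, ∀ x : X, μ {y : X | ∀ n : ℤ, dist ((f ^ n) x) ((f ^ n) y) ≤ δ} = 0 := by
  obtain ⟨δ, hδ, h⟩ := hexp
  refine ⟨δ, hδ, fun x => ?_⟩
  set sa : Set.Icc a b := ⟨a, le_refl a, hab.le⟩
  have key := h (x, sa)
  set S : Set X := {y : X | ∀ n : ℤ, dist ((f ^ n) x) ((f ^ n) y) ≤ δ} with hS
  set T : Set (Set.Icc a b) := {t : Set.Icc a b | dist sa t ≤ δ} with hT
  have hset : {z' : X × (Set.Icc a b) |
      ∀ n : ℤ, dist ((f ^ n) (x, sa).1) ((f ^ n) z'.1) ≤ δ ∧ dist (x, sa).2 z'.2 ≤ δ}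
      = S ×ˢ T := by
    ext z'
    simp only [Set.mem_setOf_eq, Set.mem_prod, hS, hT]
    constructor
    · intro hz
      exact ⟨fun n => (hz n).1, (hz 0).2⟩
    · intro hz n
      exact ⟨hz.1 n, hz.2⟩
  have hemb : MeasurableEmbedding (Subtype.val : Set.Icc a b → ℝ) :=
    MeasurableEmbedding.subtype_coe measurableSet_Icc
  have hfin : IsFiniteMeasure ((volume : Measure ℝ).comap (Subtype.val : Set.Icc a b → ℝ)) := by
    constructor
    rw [hemb.comap_apply, Set.image_univ, Subtype.range_coe, Real.volume_Icc]
    exact ENNReal.ofReal_lt_top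
  rw [hset, Measure.prod_prod] at key
  rcases mul_eq_zero.mp key with h0 | h0
  · exact h0
  · exfalso
    rw [hemb.comap_apply] at h0
    set c := min b (a + δ) with hc
    have hac : a < c := lt_min hab (by linarith)
    have hsub : Set.Icc a c ⊆ Subtype.val '' T := by
      intro r hr
      have hrb : r ∈ Set.Icc a b := ⟨hr.1, hr.2.trans (min_le_left _ _)⟩
      refine ⟨⟨r, hrb⟩, ?_, rfl⟩
      simp only [hT, Set.mem_setOf_eq, Subtype.dist_eq, Real.dist_eq]
      rw [abs_sub_comm, abs_of_nonneg (by linarith [hr.1])]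
      have := hr.2.trans (min_le_right _ _)
      linarith
    have : (0 : ENNReal) < volume (Subtype.val '' T) := by
      calc (0 : ENNReal) < volume (Set.Icc a c) := by
            rw [Real.volume_Icc]
            exact ENNReal.ofReal_pos.mpr (by linarith)
        _ ≤ volume (Subtype.val '' T) := measure_mono hsub
    exact absurd h0 this.ne'
end
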